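/- arXiv:1806.02203 — 3 statements merged into one kernel-verified Lean document; each statement's English description precedes it below -/
import Mathlib

section
/- Let G be an irreducible subgroup of PΓL(n,q), n ≥ 4, acting on the points of PG(n-1,q), and suppose for some point x the stabilizer G_x is transitive on the lines through x. If X = x^G is a proper subset of the point set and every line meeting X meets it in exactly ℓ points, then ℓ = q, and the complement of X is a hyperplane — contradicting irreducibility. Hence G is transitive on points. -/
set_option linter.unusedSectionVars false
set_option maxHeartbeats 1000000
open scoped Classical

open Module

section Aux
variable {F : Type*} [Field F] [Fintype F] {V : Type*} [AddCommGroup V] [Module F V]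
  [FiniteDimensional F V]

lemma aux_rank1_iff_atom (p : Submodule F V) : finrank F p = 1 ↔ IsAtom p := by
  constructor
  · intro h1
    constructor
    · intro hb; rw [hb, finrank_bot] at h1; omega
    · intro b hb
      have := Submodule.finrank_lt_finrank_of_lt hb
      rw [h1] at this
      exact Submodule.finrank_eq_zero.mp (by omega)
  · intro ha
    obtain ⟨v, hv, hv0⟩ := Submodule.ne_bot_iff p |>.mp ha.1
    have hsp : Submodule.span F {v} ≤ p := by
      simpa [Submodule.span_le] using hv
    have : Submodule.span F {v} = p := by
      rcases lt_or_eq_of_le hsp with h | h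
      · exact absurd (ha.2 _ h) (by simpa [Submodule.span_singleton_eq_bot] using hv0)
      · exact h
    rw [← this, finrank_span_singleton hv0]

lemma aux_rank2_iff (L : Submodule F V) :
    finrank F L = 2 ↔ ∃ p : Submodule F V, IsAtom p ∧ p ⋖ L := by
  constructor
  · intro h2
    have hLb : L ≠ ⊥ := by
      intro hb; rw [hb, finrank_bot] at h2; omega
    obtain ⟨v, hv, hv0⟩ := Submodule.ne_bot_iff L |>.mp hLb
    refine ⟨Submodule.span F {v}, (aux_rank1_iff_atom _).mp (finrank_span_singleton hv0), ?_, ?_⟩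
    · refine lt_of_le_of_ne (by simpa [Submodule.span_le] using hv) ?_
      intro he
      rw [← he, finrank_span_singleton hv0] at h2; omega
    · intro b hpb hbL
      have h1 := Submodule.finrank_lt_finrank_of_lt hpb
      have h2' := Submodule.finrank_lt_finrank_of_lt hbL
      rw [finrank_span_singleton hv0] at h1
      omega
  · rintro ⟨p, hp, hcov⟩
    have h1 := (aux_rank1_iff_atom p).mpr hp
    have hlt := Submodule.finrank_lt_finrank_of_lt hcov.1
    rw [h1] at hlt
    by_contra hne
    have h3 : 3 ≤ finrank F L := by omega
    obtain ⟨v, hvL, hvp⟩ := SetLike.exists_of_lt hcov.1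
    have hv0 : v ≠ 0 := by rintro rfl; exact hvp (Submodule.zero_mem p)
    have hbL : p ⊔ Submodule.span F {v} ≤ L := sup_le hcov.1.le (by simpa [Submodule.span_le] using hvL)
    have hpb : p < p ⊔ Submodule.span F {v} := by
      refine lt_of_le_of_ne le_sup_left ?_
      intro he
      exact hvp (he ▸ le_sup_right (α := Submodule F V) (Submodule.mem_span_singleton_self v))
    have hbrank : finrank F ↥(p ⊔ Submodule.span F {v}) ≤ 2 := by
      have := Submodule.finrank_add_le_finrank_add_finrank p (Submodule.span F {v})
      rw [h1, finrank_span_singleton hv0] at this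
      omega
    rcases eq_or_lt_of_le hbL with he | hlt
    · rw [he] at hbrank; omega
    · exact hcov.2 hpb hlt

lemma aux_iso_atom (g : Submodule F V ≃o Submodule F V) (p : Submodule F V) (hp : IsAtom p) :
    IsAtom (g p) := by
  constructor
  · intro hb
    have : g p = g ⊥ := by rw [hb, OrderIso.map_bot]
    exact hp.1 (g.injective this)
  · intro b hb
    have : g.symm b < p := by
      have := (OrderIso.lt_iff_lt g.symm).mpr hb
      simpa using this
    have := hp.2 _ this
    have : b = g ⊥ := by rw [← this]; simp
    rw [this, OrderIso.map_bot]

lemma aux_iso_rank1 (g : Submodule F V ≃o Submodule F V) (p : Submodule F V)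
    (hp : finrank F p = 1) : finrank F (g p) = 1 :=
  (aux_rank1_iff_atom _).mpr (aux_iso_atom g p ((aux_rank1_iff_atom _).mp hp))

lemma aux_iso_rank2 (g : Submodule F V ≃o Submodule F V) (L : Submodule F V)
    (hL : finrank F L = 2) : finrank F (g L) = 2 := by
  obtain ⟨p, hp, hcov⟩ := (aux_rank2_iff L).mp hL
  exact (aux_rank2_iff _).mpr ⟨g p, aux_iso_atom g p hp, (apply_covBy_apply_iff g).mpr hcov⟩

variable [Fintype (Submodule F V)]

end Aux

section Aux2
variable {F : Type*} [Field F] [Fintype F] {V : Type*} [AddCommGroup V] [Module F V]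
  [FiniteDimensional F V] [Fintype (Submodule F V)]

lemma aux_geom (t m : ℕ) : t * (∑ i ∈ Finset.range m, (t + 1) ^ i) + 1 = (t + 1) ^ m := by
  induction m with
  | zero => simp
  | succ m ih => rw [Finset.sum_range_succ, Nat.mul_add, pow_succ, ← ih]; ring

lemma aux_card_pts (W : Submodule F V) :
    (Finset.univ.filter (fun p : Submodule F V => finrank F p = 1 ∧ p ≤ W)).card
      = ∑ i ∈ Finset.range (finrank F W), Fintype.card F ^ i := by
  haveI : Finite V := Module.finite_of_finite F
  haveI : Fintype V := Fintype.ofFinite V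
  set q := Fintype.card F with hqdef
  obtain ⟨t, ht⟩ : ∃ t, q = t + 1 := ⟨q - 1, by have := Fintype.one_lt_card (α := F); omega⟩
  set T : Finset (Submodule F V) :=
    Finset.univ.filter (fun p : Submodule F V => finrank F p = 1 ∧ p ≤ W) with hT
  set S : Finset V := Finset.univ.filter (fun v => v ∈ W ∧ v ≠ 0) with hS
  have hmem : ∀ v ∈ S, Submodule.span F {v} ∈ T := by
    intro v hv
    rw [hS, Finset.mem_filter] at hv
    rw [hT, Finset.mem_filter]
    exact ⟨Finset.mem_univ _, finrank_span_singleton hv.2.2,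
      by simpa [Submodule.span_le] using hv.2.1⟩
  have hfib := Finset.card_eq_sum_card_fiberwise hmem
  have hcardsub : ∀ p : Submodule F V, finrank F p = 1 → ((p : Set V).toFinset).card = q := by
    intro p hp
    rw [Set.toFinset_card]
    simp only [SetLike.coe_sort_coe]
    rw [hqdef, card_eq_pow_finrank (K := F) (V := ↥p), hp, pow_one]
  have hfibc : ∀ p ∈ T, (S.filter (fun v => Submodule.span F {v} = p)).card = t := by
    intro p hp
    rw [hT, Finset.mem_filter] at hp
    obtain ⟨-, hp1, hpW⟩ := hp
    have hfil : S.filter (fun v => Submodule.span F {v} = p)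
        = ((p : Set V).toFinset).erase 0 := by
      ext v
      simp only [hS, Finset.mem_filter, Finset.mem_univ, true_and, Finset.mem_erase,
        Set.mem_toFinset, SetLike.mem_coe]
      constructor
      · rintro ⟨⟨hvW, hv0⟩, hsp⟩
        exact ⟨hv0, hsp ▸ Submodule.mem_span_singleton_self v⟩
      · rintro ⟨hv0, hvp⟩
        have hle : Submodule.span F {v} ≤ p := by simpa [Submodule.span_le] using hvp
        have : Submodule.span F {v} = p := by
          apply Submodule.eq_of_le_of_finrank_le hle
          rw [finrank_span_singleton hv0, hp1]
        exact ⟨⟨hpW hvp, hv0⟩, this⟩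
    rw [hfil, Finset.card_erase_of_mem (by simp), hcardsub p hp1]
    omega
  have hScard : S.card = q ^ finrank F W - 1 := by
    have hfil : S = ((W : Set V).toFinset).erase 0 := by
      ext v
      simp only [hS, Finset.mem_filter, Finset.mem_univ, true_and, Finset.mem_erase,
        Set.mem_toFinset, SetLike.mem_coe]
      tauto
    rw [hfil, Finset.card_erase_of_mem (by simp), Set.toFinset_card]
    simp only [SetLike.coe_sort_coe]
    rw [hqdef, card_eq_pow_finrank (K := F) (V := ↥W)]
  have hq1 : q ^ finrank F W - 1 = T.card * t := by
    rw [← hScard, hfib, Finset.sum_congr rfl hfibc, Finset.sum_const, smul_eq_mul]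
  have hgeom := aux_geom t (finrank F W)
  rw [← ht] at hgeom
  have htpos : 0 < t := by have := Fintype.one_lt_card (α := F); omega
  have h2 : T.card * t = t * (∑ i ∈ Finset.range (finrank F W), q ^ i) := by omega
  exact Nat.eq_of_mul_eq_mul_right htpos (h2.trans (mul_comm t _))

lemma aux_compl (A W : Submodule F V) (hAW : A ≤ W) :
    ∃ C : Submodule F V, C ≤ W ∧ A ⊓ C = ⊥ ∧ A ⊔ C = W ∧
      finrank F A + finrank F C = finrank F W := by
  obtain ⟨C', hC'⟩ := Submodule.exists_isCompl A
  refine ⟨C' ⊓ W, inf_le_right, ?_, ?_, ?_⟩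
  · rw [← le_bot_iff]
    calc A ⊓ (C' ⊓ W) ≤ A ⊓ C' := inf_le_inf_left A inf_le_left
    _ = ⊥ := hC'.inf_eq_bot
  · rw [← sup_inf_assoc_of_le _ hAW, hC'.sup_eq_top, top_inf_eq]
  · have h1 : A ⊓ (C' ⊓ W) = ⊥ := by
      rw [← le_bot_iff]
      calc A ⊓ (C' ⊓ W) ≤ A ⊓ C' := inf_le_inf_left A inf_le_left
      _ = ⊥ := hC'.inf_eq_bot
    have h2 : A ⊔ (C' ⊓ W) = W := by
      rw [← sup_inf_assoc_of_le _ hAW, hC'.sup_eq_top, top_inf_eq]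
    have := Submodule.finrank_sup_add_finrank_inf_eq A (C' ⊓ W)
    rw [h1, h2, finrank_bot] at this
    omega

/-- The subspaces of rank `finrank A + 1` between `A` and `W` are in bijection with the
points of a complement, so their number is `∑_{i < finrank W - finrank A} q^i`. -/
lemma aux_card_succ (A W : Submodule F V) (hAW : A ≤ W) :
    (Finset.univ.filter (fun M : Submodule F V =>
        A ≤ M ∧ M ≤ W ∧ finrank F M = finrank F A + 1)).card
      = ∑ i ∈ Finset.range (finrank F W - finrank F A), Fintype.card F ^ i := by
  obtain ⟨C, hCW, hACbot, hACsup, hrk⟩ := aux_compl A W hAW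
  have hkey : (Finset.univ.filter (fun M : Submodule F V =>
        A ≤ M ∧ M ≤ W ∧ finrank F M = finrank F A + 1)).card
      = (Finset.univ.filter (fun p : Submodule F V => finrank F p = 1 ∧ p ≤ C)).card := by
    apply Finset.card_bij' (fun M _ => M ⊓ C) (fun p _ => A ⊔ p)
    · -- membership forward
      intro M hM
      rw [Finset.mem_filter] at hM ⊢
      obtain ⟨-, hAM, hMW, hMr⟩ := hM
      have hsup : M ⊔ C = W := by
        apply le_antisymm (sup_le hMW hCW)
        rw [← hACsup]; exact sup_le_sup_right hAM C
      have := Submodule.finrank_sup_add_finrank_inf_eq M C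
      rw [hsup] at this
      exact ⟨Finset.mem_univ _, by omega, inf_le_right⟩
    · -- membership backward
      intro p hp
      rw [Finset.mem_filter] at hp ⊢
      obtain ⟨-, hp1, hpC⟩ := hp
      have hinf : A ⊓ p = ⊥ := by
        rw [← le_bot_iff, ← hACbot]
        exact inf_le_inf_left A hpC
      have := Submodule.finrank_sup_add_finrank_inf_eq A p
      rw [hinf, finrank_bot] at this
      exact ⟨Finset.mem_univ _, le_sup_left, sup_le hAW (hpC.trans hCW), by omega⟩
    · intro M hM
      rw [Finset.mem_filter] at hM
      obtain ⟨-, hAM, hMW, hMr⟩ := hM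
      have hle : A ⊔ M ⊓ C ≤ M := sup_le hAM inf_le_left
      apply (Submodule.eq_of_le_of_finrank_le hle ?_)
      have hinf : A ⊓ (M ⊓ C) = ⊥ := by
        rw [← le_bot_iff, ← hACbot]
        exact inf_le_inf_left A inf_le_right
      have h1 := Submodule.finrank_sup_add_finrank_inf_eq A (M ⊓ C)
      rw [hinf, finrank_bot] at h1
      have hsup : M ⊔ C = W := by
        apply le_antisymm (sup_le hMW hCW)
        rw [← hACsup]; exact sup_le_sup_right hAM C
      have h2 := Submodule.finrank_sup_add_finrank_inf_eq M C
      rw [hsup] at h2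
      omega
    · intro p hp
      rw [Finset.mem_filter] at hp
      obtain ⟨-, hp1, hpC⟩ := hp
      rw [sup_comm, sup_inf_assoc_of_le _ hpC, hACbot, sup_bot_eq]
  rw [hkey, aux_card_pts C]
  have : finrank F C = finrank F W - finrank F A := by omega
  rw [this]

lemma aux_rank_sup_point (A p : Submodule F V) (hp1 : finrank F p = 1) (hpA : ¬ p ≤ A) :
    finrank F ↥(A ⊔ p) = finrank F A + 1 := by
  have hinf : A ⊓ p = ⊥ := by
    by_contra hne
    have hlt : A ⊓ p ≤ p := inf_le_right
    have h0 : finrank F ↥(A ⊓ p) ≠ 0 := fun h => hne (Submodule.finrank_eq_zero.mp h)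
    have hle : finrank F p ≤ finrank F ↥(A ⊓ p) := by omega
    have := Submodule.eq_of_le_of_finrank_le hlt hle
    exact hpA (this ▸ inf_le_left)
  have h1 : finrank F ↥(A ⊓ p) ≤ finrank F p := Submodule.finrank_mono inf_le_right
  have := Submodule.finrank_sup_add_finrank_inf_eq A p
  rw [hinf, finrank_bot] at this
  omega

lemma aux_partition (X : Set (Submodule F V)) (A W : Submodule F V) (hAW : A ≤ W) :
    (Finset.univ.filter (fun p : Submodule F V =>
        p ∈ X ∧ finrank F p = 1 ∧ p ≤ W ∧ ¬ p ≤ A)).card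
      = ∑ M ∈ Finset.univ.filter (fun M : Submodule F V =>
            A ≤ M ∧ M ≤ W ∧ finrank F M = finrank F A + 1),
          (Finset.univ.filter (fun p : Submodule F V =>
            p ∈ X ∧ finrank F p = 1 ∧ p ≤ M ∧ ¬ p ≤ A)).card := by
  have hmem : ∀ p ∈ (Finset.univ.filter (fun p : Submodule F V =>
        p ∈ X ∧ finrank F p = 1 ∧ p ≤ W ∧ ¬ p ≤ A)),
      A ⊔ p ∈ Finset.univ.filter (fun M : Submodule F V =>
            A ≤ M ∧ M ≤ W ∧ finrank F M = finrank F A + 1) := by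
    intro p hp
    rw [Finset.mem_filter] at hp ⊢
    obtain ⟨-, hpX, hp1, hpW, hpA⟩ := hp
    exact ⟨Finset.mem_univ _, le_sup_left, sup_le hAW hpW, aux_rank_sup_point A p hp1 hpA⟩
  rw [Finset.card_eq_sum_card_fiberwise hmem]
  apply Finset.sum_congr rfl
  intro M hM
  rw [Finset.mem_filter] at hM
  obtain ⟨-, hAM, hMW, hMr⟩ := hM
  congr 1
  ext p
  simp only [Finset.mem_filter, Finset.mem_univ, true_and]
  constructor
  · rintro ⟨⟨hpX, hp1, hpW, hpA⟩, hsup⟩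
    exact ⟨hpX, hp1, le_trans le_sup_right (le_of_eq hsup), hpA⟩
  · rintro ⟨hpX, hp1, hpM, hpA⟩
    refine ⟨⟨hpX, hp1, hpM.trans hMW, hpA⟩, ?_⟩
    apply Submodule.eq_of_le_of_finrank_le (sup_le hAM hpM)
    rw [aux_rank_sup_point A p hp1 hpA, hMr]

lemma aux_rank1_span (z : Submodule F V) (hz : finrank F z = 1) :
    ∃ v : V, v ≠ 0 ∧ z = Submodule.span F {v} := by
  have hzb : z ≠ ⊥ := fun h => by rw [h, finrank_bot] at hz; omega
  obtain ⟨v, hv, hv0⟩ := Submodule.ne_bot_iff z |>.mp hzb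
  refine ⟨v, hv0, ?_⟩
  have hle : Submodule.span F {v} ≤ z := by simpa [Submodule.span_le] using hv
  exact (Submodule.eq_of_le_of_finrank_le hle (by rw [finrank_span_singleton hv0, hz])).symm

lemma aux_exists_superspace (k : ℕ) (hk : k ≤ finrank F V) :
    ∀ A : Submodule F V, finrank F A ≤ k → ∃ W, A ≤ W ∧ finrank F W = k := by
  induction k with
  | zero => intro A h1; refine ⟨A, le_refl A, by omega⟩
  | succ k ih =>
    intro A h1
    rcases Nat.lt_or_ge (finrank F A) (k + 1) with h | h
    · obtain ⟨W', hAW', hW'⟩ := ih (by omega) A (by omega)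
      have hW'top : W' ≠ ⊤ := by
        intro ht; rw [ht, finrank_top] at hW'; omega
      obtain ⟨v, hv⟩ : ∃ v, v ∉ W' := by
        by_contra hc; push_neg at hc; exact hW'top (Submodule.eq_top_iff'.mpr hc)
      have hv0 : v ≠ 0 := fun h => hv (h ▸ W'.zero_mem)
      refine ⟨W' ⊔ Submodule.span F {v}, le_trans hAW' le_sup_left, ?_⟩
      rw [aux_rank_sup_point W' _ (finrank_span_singleton hv0)
        (by simpa [Submodule.span_le] using hv), hW']
    · exact ⟨A, le_refl A, by omega⟩

lemma aux_span_closure (S : Set (Submodule F V))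
    (hcl : ∀ p ∈ S, ∀ p' ∈ S, p ≠ p' → ∀ z : Submodule F V,
      finrank F z = 1 → z ≤ p ⊔ p' → z ∈ S)
    (h1 : ∀ p ∈ S, finrank F p = 1) :
    ∀ z : Submodule F V, finrank F z = 1 → z ≤ sSup S → z ∈ S := by
  have key : ∀ T : Finset (Submodule F V), ↑T ⊆ S →
      ∀ z : Submodule F V, finrank F z = 1 → z ≤ T.sup id → z ∈ S := by
    intro T
    induction T using Finset.induction_on with
    | empty =>
      intro _ z hz hle
      simp only [Finset.sup_empty, le_bot_iff] at hle
      rw [hle, finrank_bot] at hz; omega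
    | @insert p T' hpT ih =>
      intro hsub z hz hle
      have hpS : p ∈ S := hsub (Finset.mem_insert_self p T')
      have hsub' : ↑T' ⊆ S := fun a ha => hsub (Finset.mem_insert_of_mem ha)
      rw [Finset.sup_insert, id_eq] at hle
      obtain ⟨v, hv0, rfl⟩ := aux_rank1_span z hz
      have hvmem : v ∈ p ⊔ T'.sup id :=
        hle (Submodule.mem_span_singleton_self v)
      obtain ⟨u, hu, w, hw, huw⟩ := Submodule.mem_sup.mp hvmem
      by_cases hw0 : w = 0
      · have hvp : v ∈ p := by rw [← huw, hw0, add_zero]; exact hu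
        have hle2 : Submodule.span F {v} ≤ p := by simpa [Submodule.span_le] using hvp
        have : Submodule.span F {v} = p :=
          Submodule.eq_of_le_of_finrank_le hle2 (by rw [hz, h1 p hpS])
        rwa [this]
      by_cases hu0 : u = 0
      · have hvw : v ∈ T'.sup id := by rw [← huw, hu0, zero_add]; exact hw
        exact ih hsub' _ hz (by simpa [Submodule.span_le] using hvw)
      · have hm1 : finrank F ↥(Submodule.span F {w}) = 1 := finrank_span_singleton hw0
        have hmS : Submodule.span F {w} ∈ S :=
          ih hsub' _ hm1 (by simpa [Submodule.span_le] using hw)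
        by_cases hpm : p = Submodule.span F {w}
        · have hvp : v ∈ p := by
            rw [← huw]
            exact p.add_mem hu (by rw [hpm]; exact Submodule.mem_span_singleton_self w)
          have hle2 : Submodule.span F {v} ≤ p := by simpa [Submodule.span_le] using hvp
          have : Submodule.span F {v} = p :=
            Submodule.eq_of_le_of_finrank_le hle2 (by rw [hz, h1 p hpS])
          rwa [this]
        · refine hcl p hpS _ hmS hpm _ hz ?_
          have hvm : v ∈ p ⊔ Submodule.span F {w} := by
            rw [← huw]
            exact Submodule.mem_sup.mpr ⟨u, hu, w, Submodule.mem_span_singleton_self w, rfl⟩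
          simpa [Submodule.span_le] using hvm
  intro z hz hle
  apply key S.toFinset (by simp) z hz
  rwa [Finset.sup_id_eq_sSup, Set.coe_toFinset]

lemma aux_arith (q m r : ℕ) (hq : 2 ≤ q) (hm : 1 ≤ m) (hmq : m + 1 ≤ q)
    (h : 1 + (1 + q + q * q) * m = r * (1 + (1 + q) * m)) : m + 1 = q := by
  by_contra hne
  have hlt : m + 1 < q := by omega
  have h' : (1:ℤ) + (1 + q + q * q) * m = r * (1 + (1 + q) * m) := by exact_mod_cast h
  have key : ((q:ℤ) - r) * (1 + (1 + q) * m) = (q:ℤ) - m - 1 := by linear_combination h'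
  have hd : ((1:ℤ) + (1 + q) * m) ≥ q + 2 := by nlinarith [hm, hq]
  have hpos : (0:ℤ) < (q:ℤ) - m - 1 := by
    have : (m:ℤ) + 1 < q := by exact_mod_cast hlt
    linarith
  have hqr : (0:ℤ) < (q:ℤ) - r := by nlinarith
  have hge1 : (1:ℤ) ≤ (q:ℤ) - r := hqr
  nlinarith

end Aux2
/-- Proposition 8.6: let `G` be an irreducible subgroup of `PΓL(n,q)`,
`n ≥ 4`, such that for some point `x` the stabilizer `G_x` is transitive on the lines
through `x`.  Then `G` is transitive on points. -/
theorem irreducible_line_transitive_stabilizer_implies_point_transitive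
    (F : Type*) [Field F] [Fintype F] (q n : ℕ) (hq : Fintype.card F = q)
    (V : Type*) [AddCommGroup V] [Module F V] [FiniteDimensional F V]
    (hn : finrank F V = n) (hn4 : 4 ≤ n)
    (G : Subgroup ((Submodule F V) ≃o (Submodule F V)))
    -- irreducibility: no proper nonzero `G`-invariant subspace
    (hirr : ∀ W : Submodule F V, (∀ g ∈ G, g W = W) → W = ⊥ ∨ W = ⊤)
    (x : Submodule F V) (hx : finrank F x = 1)
    -- `G_x` is transitive on the lines through `x`
    (hlines : ∀ L L' : Submodule F V, finrank F L = 2 → finrank F L' = 2 →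
        x ≤ L → x ≤ L' → ∃ g ∈ G, g x = x ∧ g L = L') :
    ∀ y : Submodule F V, finrank F y = 1 → ∃ g ∈ G, g x = y := by
  haveI : Finite V := Module.finite_of_finite F
  haveI : Finite (Submodule F V) :=
    Finite.of_injective (fun W : Submodule F V => (W : Set V)) SetLike.coe_injective
  haveI : Fintype (Submodule F V) := Fintype.ofFinite _
  have hq2 : 2 ≤ q := by rw [← hq]; exact Fintype.one_lt_card
  intro y hy
  by_contra hyX0
  push_neg at hyX0
  -- the orbit of `x`
  set X : Set (Submodule F V) := {p | ∃ g ∈ G, g x = p} with hXdef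
  have hxX : x ∈ X := ⟨1, G.one_mem, rfl⟩
  have hXrank : ∀ p ∈ X, finrank F p = 1 := by
    rintro p ⟨g, hg, rfl⟩; exact aux_iso_rank1 g x hx
  have hXmap : ∀ g ∈ G, ∀ p, p ∈ X → g p ∈ X := by
    rintro g hg p ⟨h, hh, rfl⟩
    exact ⟨g * h, mul_mem hg hh, rfl⟩
  have hXmap' : ∀ g ∈ G, ∀ p, g p ∈ X → p ∈ X := by
    intro g hg p hp
    have := hXmap g⁻¹ (inv_mem hg) _ hp
    rwa [RelIso.inv_apply_self] at this
  have hyX : y ∉ X := by rintro ⟨g, hg, hgx⟩; exact hyX0 g hg hgx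
  have hxy : x ≠ y := fun h => hyX (h ▸ hxX)
  have hpt_le : ∀ p p' : Submodule F V, finrank F p = 1 → finrank F p' = 1 →
      p ≤ p' → p = p' := by
    intro p p' h1 h2 hle
    exact Submodule.eq_of_le_of_finrank_le hle (by omega)
  set XS : Submodule F V → Finset (Submodule F V) := fun W =>
    Finset.univ.filter (fun p => p ∈ X ∧ finrank F p = 1 ∧ p ≤ W) with hXSdef
  have hyx2 : finrank F ↥(x ⊔ y) = 2 := by
    rw [aux_rank_sup_point x y hy (fun h => hxy (hpt_le y x hy hx h).symm), hx]
  set ℓ := (XS (x ⊔ y)).card with hldef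
  -- every line meeting the orbit meets it in exactly ℓ points
  have hconst : ∀ L : Submodule F V, finrank F L = 2 → ∀ p ∈ X, p ≤ L →
      (XS L).card = ℓ := by
    intro L hL2 p hpX hpL
    obtain ⟨g, hg, rfl⟩ := hpX
    have hxL : x ≤ g⁻¹ L := by
      have := (g⁻¹ : (Submodule F V) ≃o (Submodule F V)).monotone hpL
      rwa [RelIso.inv_apply_self] at this
    have hr : finrank F ↥(g⁻¹ L) = 2 := aux_iso_rank2 g⁻¹ L hL2
    obtain ⟨h, hh, hhx, hhL⟩ := hlines (g⁻¹ L) (x ⊔ y) hr hyx2 hxL le_sup_left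
    have hσG : h * g⁻¹ ∈ G := mul_mem hh (inv_mem hg)
    have hσL : (h * g⁻¹) L = x ⊔ y := by
      rw [RelIso.mul_apply, hhL]
    rw [hldef]
    apply Finset.card_bij' (fun p _ => (h * g⁻¹) p) (fun p _ => (h * g⁻¹)⁻¹ p)
    · intro a ha
      simp only [hXSdef, Finset.mem_filter, Finset.mem_univ, true_and] at ha ⊢
      refine ⟨hXmap _ hσG a ha.1, aux_iso_rank1 _ a ha.2.1, ?_⟩
      have := (h * g⁻¹).monotone ha.2.2
      rwa [hσL] at this
    · intro a ha
      simp only [hXSdef, Finset.mem_filter, Finset.mem_univ, true_and] at ha ⊢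
      refine ⟨hXmap' _ hσG _ (by rw [RelIso.apply_inv_self]; exact ha.1),
        aux_iso_rank1 _ a ha.2.1, ?_⟩
      have := ((h * g⁻¹)⁻¹ : (Submodule F V) ≃o (Submodule F V)).monotone ha.2.2
      rwa [← hσL, RelIso.inv_apply_self] at this
    · intro a _; exact RelIso.inv_apply_self _ a
    · intro a _; exact RelIso.apply_inv_self _ a
  have hxmem : ∀ W : Submodule F V, x ≤ W → x ∈ XS W := by
    intro W hW
    simp only [hXSdef, Finset.mem_filter, Finset.mem_univ, true_and]
    exact ⟨hxX, hx, hW⟩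
  have hl1 : 1 ≤ ℓ := by
    rw [hldef]
    exact Finset.card_pos.mpr ⟨x, hxmem _ le_sup_left⟩
  have herase : ∀ (W x₀ : Submodule F V), x₀ ∈ X → finrank F x₀ = 1 →
      (XS W).erase x₀ = Finset.univ.filter
        (fun p => p ∈ X ∧ finrank F p = 1 ∧ p ≤ W ∧ ¬ p ≤ x₀) := by
    intro W x₀ hx₀X hx₀1
    ext p
    simp only [hXSdef, Finset.mem_erase, Finset.mem_filter, Finset.mem_univ, true_and]
    constructor
    · rintro ⟨hne, hpX, hp1, hpW⟩
      exact ⟨hpX, hp1, hpW, fun hle => hne (hpt_le p x₀ hp1 hx₀1 hle)⟩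
    · rintro ⟨hpX, hp1, hpW, hnle⟩
      exact ⟨fun he => hnle (he ▸ le_refl p), hpX, hp1, hpW⟩
  -- Count of `XS W` through a point of the orbit
  have hC1 : ∀ (W x₀ : Submodule F V), x₀ ∈ X → x₀ ≤ W →
      (XS W).card = 1 + (∑ i ∈ Finset.range (finrank F W - 1), q ^ i) * (ℓ - 1) := by
    intro W x₀ hx₀X hx₀W
    have hx₀1 : finrank F x₀ = 1 := hXrank _ hx₀X
    have hx₀mem : x₀ ∈ XS W := by
      simp only [hXSdef, Finset.mem_filter, Finset.mem_univ, true_and]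
      exact ⟨hx₀X, hx₀1, hx₀W⟩
    have hcard : ((XS W).erase x₀).card = (XS W).card - 1 :=
      Finset.card_erase_of_mem hx₀mem
    have hcpos : 1 ≤ (XS W).card := Finset.card_pos.mpr ⟨x₀, hx₀mem⟩
    have hpart := aux_partition X x₀ W hx₀W
    rw [← herase W x₀ hx₀X hx₀1] at hpart
    have hterm : ∀ M ∈ Finset.univ.filter (fun M : Submodule F V =>
        x₀ ≤ M ∧ M ≤ W ∧ finrank F M = finrank F x₀ + 1),
        (Finset.univ.filter (fun p : Submodule F V =>
          p ∈ X ∧ finrank F p = 1 ∧ p ≤ M ∧ ¬ p ≤ x₀)).card = ℓ - 1 := by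
      intro M hM
      rw [Finset.mem_filter] at hM
      obtain ⟨-, hx₀M, hMW, hMr⟩ := hM
      have hM2 : finrank F M = 2 := by rw [hMr, hx₀1]
      have hXSM : (XS M).card = ℓ := hconst M hM2 x₀ hx₀X hx₀M
      have hx₀memM : x₀ ∈ XS M := by
        simp only [hXSdef, Finset.mem_filter, Finset.mem_univ, true_and]
        exact ⟨hx₀X, hx₀1, hx₀M⟩
      rw [← herase M x₀ hx₀X hx₀1, Finset.card_erase_of_mem hx₀memM, hXSM]
    rw [Finset.sum_congr rfl hterm, Finset.sum_const, smul_eq_mul,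
      aux_card_succ x₀ W hx₀W, hx₀1, hq] at hpart
    omega
  -- counting through a point not in the orbit
  have hC2 : ∀ (W y₀ : Submodule F V), finrank F y₀ = 1 → y₀ ∉ X → y₀ ≤ W →
      ∃ k : ℕ, k ≤ ∑ i ∈ Finset.range (finrank F W - 1), q ^ i ∧
        (XS W).card = ℓ * k ∧
        (k < ∑ i ∈ Finset.range (finrank F W - 1), q ^ i →
          ∃ M : Submodule F V, y₀ ≤ M ∧ M ≤ W ∧ finrank F M = 2 ∧ XS M = ∅) := by
    intro W y₀ h1 hy₀X hy₀W
    have hXSW : XS W = Finset.univ.filter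
        (fun p => p ∈ X ∧ finrank F p = 1 ∧ p ≤ W ∧ ¬ p ≤ y₀) := by
      ext p
      simp only [hXSdef, Finset.mem_filter, Finset.mem_univ, true_and]
      constructor
      · rintro ⟨hpX, hp1, hpW⟩
        refine ⟨hpX, hp1, hpW, fun hle => hy₀X ?_⟩
        rwa [← hpt_le p y₀ hp1 h1 hle]
      · rintro ⟨hpX, hp1, hpW, -⟩; exact ⟨hpX, hp1, hpW⟩
    set B := Finset.univ.filter (fun M : Submodule F V =>
        y₀ ≤ M ∧ M ≤ W ∧ finrank F M = finrank F y₀ + 1) with hBdef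
    have hpart := aux_partition X y₀ W hy₀W
    rw [← hXSW, ← hBdef] at hpart
    have hfib : ∀ M ∈ B, (Finset.univ.filter (fun p : Submodule F V =>
        p ∈ X ∧ finrank F p = 1 ∧ p ≤ M ∧ ¬ p ≤ y₀)).card = (XS M).card := by
      intro M hM
      congr 1
      ext p
      simp only [hXSdef, Finset.mem_filter, Finset.mem_univ, true_and]
      constructor
      · rintro ⟨hpX, hp1, hpM, -⟩; exact ⟨hpX, hp1, hpM⟩
      · rintro ⟨hpX, hp1, hpM⟩
        refine ⟨hpX, hp1, hpM, fun hle => hy₀X ?_⟩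
        rwa [← hpt_le p y₀ hp1 h1 hle]
    rw [Finset.sum_congr rfl hfib] at hpart
    set Bm := B.filter (fun M => (XS M).Nonempty) with hBmdef
    have hsplit : ∑ M ∈ Bm, (XS M).card = ∑ M ∈ B, (XS M).card := by
      apply Finset.sum_filter_of_ne
      intro M _ hne
      exact Finset.card_pos.mp (Nat.pos_of_ne_zero hne)
    have hBm_card : ∀ M ∈ Bm, (XS M).card = ℓ := by
      intro M hM
      rw [hBmdef, Finset.mem_filter, hBdef, Finset.mem_filter] at hM
      obtain ⟨⟨-, hy₀M, hMW, hMr⟩, hne⟩ := hM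
      obtain ⟨p, hp⟩ := hne
      simp only [hXSdef, Finset.mem_filter, Finset.mem_univ, true_and] at hp
      exact hconst M (by rw [hMr, h1]) p hp.1 hp.2.2
    have hBcard : B.card = ∑ i ∈ Finset.range (finrank F W - 1), q ^ i := by
      rw [hBdef, aux_card_succ y₀ W hy₀W, h1, hq]
    refine ⟨Bm.card, ?_, ?_, ?_⟩
    · rw [← hBcard]; exact Finset.card_filter_le _ _
    · rw [hpart, ← hsplit, Finset.sum_congr rfl hBm_card, Finset.sum_const,
        smul_eq_mul, mul_comm]
    · intro hk
      by_contra hno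
      push_neg at hno
      have hall : ∀ M ∈ B, (XS M).Nonempty := by
        intro M hM
        rw [hBdef, Finset.mem_filter] at hM
        obtain ⟨-, hy₀M, hMW, hMr⟩ := hM
        by_contra hne
        exact hne (hno M hy₀M hMW (by rw [hMr, h1]))
      have heq : Bm = B := by rw [hBmdef]; exact Finset.filter_true_of_mem hall
      rw [heq, hBcard] at hk
      omega
  have hsum2 : (∑ i ∈ Finset.range 2, q ^ i) = 1 + q := by
    simp [Finset.sum_range_succ]
  have hsum3 : (∑ i ∈ Finset.range 3, q ^ i) = 1 + q + q * q := by
    simp [Finset.sum_range_succ]; ring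
  -- a plane through x and y
  obtain ⟨P, hxyP, hP3⟩ := aux_exists_superspace 3 (by rw [hn]; omega) (x ⊔ y)
    (by rw [hyx2]; omega)
  have hxP : x ≤ P := le_trans le_sup_left hxyP
  have hyP : y ≤ P := le_trans le_sup_right hxyP
  have hcardP := hC1 P x hxX hxP
  rw [hP3] at hcardP
  norm_num [hsum2] at hcardP
  obtain ⟨k, hk_le, hk_eq, hk_miss⟩ := hC2 P y hy hyX hyP
  rw [hP3] at hk_le hk_miss
  norm_num [hsum2] at hk_le hk_miss
  -- basic arithmetic in the plane
  set m := ℓ - 1 with hmdef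
  have hℓm : ℓ = m + 1 := by omega
  have hE : 1 + (1 + q) * m = (m + 1) * k := by
    rw [← hℓm, ← hk_eq, hcardP]
  have hexp : (m + 1) * (1 + q) = (1 + q) * m + (1 + q) := by ring
  have hk_lt : k < 1 + q := by
    rcases Nat.lt_or_ge k (1 + q) with h | h
    · exact h
    · have := Nat.mul_le_mul_left (m + 1) h
      omega
  obtain ⟨M0, hyM0, hM0P, hM02, hM0empty⟩ := hk_miss hk_lt
  -- ℓ divides q, in particular ℓ ≤ q
  obtain ⟨d, hd⟩ : ∃ d, 1 + q = k + d := ⟨1 + q - k, by omega⟩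
  have hqd : q = (m + 1) * d := by
    have h' : ((1:ℤ) + (1 + q) * m) = (m + 1) * k := by exact_mod_cast hE
    have hd' : ((1:ℤ) + q) = k + d := by exact_mod_cast hd
    have hz : (q:ℤ) = (m + 1) * d := by linear_combination (-1 : ℤ) * h' + ((m:ℤ) + 1) * hd'
    exact_mod_cast hz
  have hd1 : 1 ≤ d := by omega
  have hlq : ℓ ≤ q := by
    have : (m + 1) * 1 ≤ (m + 1) * d := Nat.mul_le_mul_left _ hd1
    omega
  -- ℓ ≥ 2
  have hl2 : 2 ≤ ℓ := by
    by_contra hc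
    have hXx : ∀ p ∈ X, p = x := by
      intro p hpX
      by_contra hne
      have hp1 := hXrank p hpX
      have hL2 : finrank F ↥(x ⊔ p) = 2 := by
        rw [aux_rank_sup_point x p hp1 (fun h => hne (hpt_le p x hp1 hx h)), hx]
      have hcardL := hconst (x ⊔ p) hL2 x hxX le_sup_left
      have hxm : x ∈ XS (x ⊔ p) := hxmem _ le_sup_left
      have hpm : p ∈ XS (x ⊔ p) := by
        simp only [hXSdef, Finset.mem_filter, Finset.mem_univ, true_and]
        exact ⟨hpX, hp1, le_sup_right⟩
      have h2 : 1 < (XS (x ⊔ p)).card :=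
        Finset.one_lt_card.mpr ⟨x, hxm, p, hpm, fun h => hne h.symm⟩
      omega
    have hfix : ∀ g ∈ G, g x = x := fun g hg => hXx _ (hXmap g hg x hxX)
    rcases hirr x hfix with h | h
    · rw [h, finrank_bot] at hx; omega
    · rw [h, finrank_top, hn] at hx; omega
  -- a 4-dimensional space above the plane
  obtain ⟨W4, hPW4, hW44⟩ := aux_exists_superspace 4 (by rw [hn]; omega) P
    (by rw [hP3]; omega)
  have hxW4 : x ≤ W4 := hxP.trans hPW4
  have hM0W4 : M0 ≤ W4 := hM0P.trans hPW4
  have hM0X : ∀ p, p ∈ X → finrank F p = 1 → ¬ p ≤ M0 := by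
    intro p hpX hp1 hle
    have hmem : p ∈ XS M0 := by
      simp only [hXSdef, Finset.mem_filter, Finset.mem_univ, true_and]
      exact ⟨hpX, hp1, hle⟩
    rw [hM0empty] at hmem
    exact absurd hmem (Finset.notMem_empty p)
  -- partition of XS W4 by the planes through M0
  have hXSW4 : XS W4 = Finset.univ.filter
      (fun p => p ∈ X ∧ finrank F p = 1 ∧ p ≤ W4 ∧ ¬ p ≤ M0) := by
    ext p
    simp only [hXSdef, Finset.mem_filter, Finset.mem_univ, true_and]
    constructor
    · rintro ⟨hpX, hp1, hpW⟩
      exact ⟨hpX, hp1, hpW, hM0X p hpX hp1⟩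
    · rintro ⟨hpX, hp1, hpW, -⟩; exact ⟨hpX, hp1, hpW⟩
  set B4 := Finset.univ.filter (fun M : Submodule F V =>
      M0 ≤ M ∧ M ≤ W4 ∧ finrank F M = finrank F M0 + 1) with hB4def
  have hpart4 := aux_partition X M0 W4 hM0W4
  rw [← hXSW4, ← hB4def] at hpart4
  have hfib4 : ∀ M ∈ B4, (Finset.univ.filter (fun p : Submodule F V =>
      p ∈ X ∧ finrank F p = 1 ∧ p ≤ M ∧ ¬ p ≤ M0)).card = (XS M).card := by
    intro M hM
    congr 1
    ext p
    simp only [hXSdef, Finset.mem_filter, Finset.mem_univ, true_and]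
    constructor
    · rintro ⟨hpX, hp1, hpM, -⟩; exact ⟨hpX, hp1, hpM⟩
    · rintro ⟨hpX, hp1, hpM⟩
      exact ⟨hpX, hp1, hpM, hM0X p hpX hp1⟩
  rw [Finset.sum_congr rfl hfib4] at hpart4
  set B4m := B4.filter (fun M => (XS M).Nonempty) with hB4mdef
  have hsplit4 : ∑ M ∈ B4m, (XS M).card = ∑ M ∈ B4, (XS M).card := by
    apply Finset.sum_filter_of_ne
    intro M _ hne
    exact Finset.card_pos.mp (Nat.pos_of_ne_zero hne)
  have hB4m_card : ∀ M ∈ B4m, (XS M).card = 1 + (1 + q) * m := by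
    intro M hM
    rw [hB4mdef, Finset.mem_filter, hB4def, Finset.mem_filter] at hM
    obtain ⟨⟨-, hM0M, hMW, hMr⟩, hne⟩ := hM
    obtain ⟨p, hp⟩ := hne
    simp only [hXSdef, Finset.mem_filter, Finset.mem_univ, true_and] at hp
    have hM3 : finrank F M = 3 := by rw [hMr, hM02]
    have := hC1 M p hp.1 hp.2.2
    rw [hM3] at this
    norm_num [hsum2] at this
    rw [this]
  have hr_le : B4m.card ≤ 1 + q := by
    have hB4card : B4.card = 1 + q := by
      rw [hB4def, aux_card_succ M0 W4 hM0W4, hM02, hW44, hq]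
      norm_num [hsum2]
    rw [← hB4card]
    exact Finset.card_filter_le _ _
  have hcardW4 := hC1 W4 x hxX hxW4
  rw [hW44] at hcardW4
  norm_num [hsum3] at hcardW4
  have hE4 : 1 + (1 + q + q * q) * m = B4m.card * (1 + (1 + q) * m) := by
    rw [← hcardW4, hpart4, ← hsplit4, Finset.sum_congr rfl hB4m_card,
      Finset.sum_const, smul_eq_mul]
  have hmq : m + 1 = q := aux_arith q m B4m.card hq2 (by omega) (by omega) hE4
  -- the complement of the orbit is closed under lines : contradiction with irreducibility
  set Y : Set (Submodule F V) := {p | finrank F p = 1 ∧ p ∉ X} with hYdef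
  have hcl : ∀ p₁ ∈ Y, ∀ p₂ ∈ Y, p₁ ≠ p₂ → ∀ z : Submodule F V,
      finrank F z = 1 → z ≤ p₁ ⊔ p₂ → z ∈ Y := by
    rintro p₁ ⟨hp₁1, hp₁X⟩ p₂ ⟨hp₂1, hp₂X⟩ hne z hz1 hzle
    refine ⟨hz1, fun hzX => ?_⟩
    have hL2 : finrank F ↥(p₁ ⊔ p₂) = 2 := by
      rw [aux_rank_sup_point p₁ p₂ hp₂1
        (fun h => hne (hpt_le p₂ p₁ hp₂1 hp₁1 h).symm), hp₁1]
    have hcardL := hconst (p₁ ⊔ p₂) hL2 z hzX hzle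
    have hsub : XS (p₁ ⊔ p₂) ⊆ ((Finset.univ.filter
        (fun p : Submodule F V => finrank F p = 1 ∧ p ≤ p₁ ⊔ p₂)).erase p₁).erase p₂ := by
      intro p hp
      simp only [hXSdef, Finset.mem_filter, Finset.mem_univ, true_and] at hp
      simp only [Finset.mem_erase, Finset.mem_filter, Finset.mem_univ, true_and]
      exact ⟨fun h => hp₂X (h ▸ hp.1), fun h => hp₁X (h ▸ hp.1), hp.2.1, hp.2.2⟩
    have hc1 := Finset.card_le_card hsub
    have hptsL : (Finset.univ.filter
        (fun p : Submodule F V => finrank F p = 1 ∧ p ≤ p₁ ⊔ p₂)).card = 1 + q := by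
      rw [aux_card_pts (p₁ ⊔ p₂), hL2, hq, hsum2]
    have hp₁mem : p₁ ∈ Finset.univ.filter
        (fun p : Submodule F V => finrank F p = 1 ∧ p ≤ p₁ ⊔ p₂) := by
      simp only [Finset.mem_filter, Finset.mem_univ, true_and]
      exact ⟨hp₁1, le_sup_left⟩
    have hp₂mem : p₂ ∈ (Finset.univ.filter
        (fun p : Submodule F V => finrank F p = 1 ∧ p ≤ p₁ ⊔ p₂)).erase p₁ := by
      rw [Finset.mem_erase]
      simp only [Finset.mem_filter, Finset.mem_univ, true_and]
      exact ⟨fun h => hne (h.symm), hp₂1, le_sup_right⟩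
    rw [Finset.card_erase_of_mem hp₂mem, Finset.card_erase_of_mem hp₁mem, hptsL] at hc1
    rw [hcardL] at hc1
    omega
  have hYinv : ∀ g ∈ G, g (sSup Y) = sSup Y := by
    intro g hg
    rw [map_sSup]
    congr 1
    ext p
    simp only [Set.mem_image]
    constructor
    · rintro ⟨p', ⟨hp'1, hp'X⟩, rfl⟩
      exact ⟨aux_iso_rank1 g p' hp'1, fun h => hp'X (hXmap' g hg p' h)⟩
    · rintro ⟨hp1, hpX⟩
      refine ⟨g⁻¹ p, ⟨aux_iso_rank1 g⁻¹ p hp1, fun h => hpX ?_⟩,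
        RelIso.apply_inv_self g p⟩
      have := hXmap g hg _ h
      rwa [RelIso.apply_inv_self] at this
  rcases hirr (sSup Y) hYinv with hbot | htop
  · have hyle : y ≤ sSup Y := le_sSup ⟨hy, hyX⟩
    rw [hbot, le_bot_iff] at hyle
    rw [hyle, finrank_bot] at hy
    omega
  · have hxY := aux_span_closure Y hcl (fun p hp => hp.1) x hx
      (by rw [htop]; exact le_top)
    exact hxY.2 hxX
end

section
/- There is no generalized pentagon (generalized 5-gon) with parameters q, q for any q ≥ 2, i.e., no generalized pentagon in which every line has q+1 points and every point is on q+1 lines. -/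
set_option linter.unusedSectionVars false
set_option linter.unusedVariables false


/-- The incidence graph of a point-line geometry, on the disjoint union of points and
lines; vertices are adjacent exactly when they form an incident point-line pair. -/
def IncGraph {P L : Type*} (I : P → L → Prop) : SimpleGraph (P ⊕ L) where
  Adj a b :=
    (∃ p l, a = Sum.inl p ∧ b = Sum.inr l ∧ I p l) ∨
    (∃ p l, a = Sum.inr l ∧ b = Sum.inl p ∧ I p l)
  symm := by
    constructor
    rintro a b (⟨p, l, rfl, rfl, h⟩ | ⟨p, l, rfl, rfl, h⟩)
    · exact Or.inr ⟨p, l, rfl, rfl, h⟩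
    · exact Or.inl ⟨p, l, rfl, rfl, h⟩
  loopless := by
    constructor
    rintro a (⟨p, l, rfl, h, -⟩ | ⟨p, l, rfl, h, -⟩) <;> simp at h

lemma SimpleGraph.Walk.getVert_cons_one {V : Type*} {G : SimpleGraph V} {u v w : V}
    (p : G.Walk v w) (h : G.Adj u v) : (p.cons h).getVert 1 = v :=
  (p.getVert_cons h one_ne_zero).trans p.getVert_zero

namespace IncGraph

variable {P L : Type*} {I : P → L → Prop}

lemma adj_mk {p : P} {l : L} (h : I p l) :
    (IncGraph I).Adj (Sum.inl p) (Sum.inr l) := Or.inl ⟨p, l, rfl, rfl, h⟩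

lemma adj_mk' {p : P} {l : L} (h : I p l) :
    (IncGraph I).Adj (Sum.inr l) (Sum.inl p) := Or.inr ⟨p, l, rfl, rfl, h⟩

lemma adj_inl {p : P} {c : P ⊕ L} (h : (IncGraph I).Adj (Sum.inl p) c) :
    ∃ l, c = Sum.inr l ∧ I p l := by
  rcases h with ⟨p', l, hp, rfl, hI⟩ | ⟨p', l, hp, h2, hI⟩
  · obtain rfl : p = p' := by simpa using hp
    exact ⟨l, rfl, hI⟩
  · simp at hp

lemma adj_inr {l : L} {c : P ⊕ L} (h : (IncGraph I).Adj (Sum.inr l) c) :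
    ∃ p, c = Sum.inl p ∧ I p l := by
  rcases h with ⟨p', l', hp, h2, hI⟩ | ⟨p', l', hp, rfl, hI⟩
  · simp at hp
  · obtain rfl : l = l' := by simpa using hp
    exact ⟨p', rfl, hI⟩

lemma adj_isLeft {a b : P ⊕ L} (h : (IncGraph I).Adj a b) : a.isLeft = !b.isLeft := by
  rcases h with ⟨p, l, rfl, rfl, _⟩ | ⟨p, l, rfl, rfl, _⟩ <;> simp

lemma walk_even {a b : P ⊕ L} (w : (IncGraph I).Walk a b) :
    Even w.length ↔ (a.isLeft = b.isLeft) := by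
  induction w with
  | nil => simp
  | @cons u v c h w ih =>
    have hflip := adj_isLeft h
    rw [SimpleGraph.Walk.length_cons, Nat.even_add_one, ih, hflip]
    cases v.isLeft <;> cases c.isLeft <;> simp

end IncGraph

/-- Two points are collinear if they lie on a common line. -/
def Col {P L : Type*} (I : P → L → Prop) (p p' : P) : Prop := ∃ l, I p l ∧ I p' l

namespace IncGraph

variable {P L : Type*} {I : P → L → Prop}

lemma dist_pp_even (hconn : ∀ a b : P ⊕ L, (IncGraph I).Reachable a b) (p p' : P) :
    Even ((IncGraph I).dist (Sum.inl p) (Sum.inl p')) := by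
  obtain ⟨w, hw⟩ := (hconn (Sum.inl p) (Sum.inl p')).exists_walk_length_eq_dist
  rw [← hw]
  exact (walk_even w).2 rfl

lemma dist_lp_odd (hconn : ∀ a b : P ⊕ L, (IncGraph I).Reachable a b) (l : L) (p : P) :
    ¬ Even ((IncGraph I).dist (Sum.inr l) (Sum.inl p)) := by
  obtain ⟨w, hw⟩ := (hconn (Sum.inr l) (Sum.inl p)).exists_walk_length_eq_dist
  rw [← hw, walk_even w]
  simp

section

variable (hconn : ∀ a b : P ⊕ L, (IncGraph I).Reachable a b)
  (hdiam : ∀ a b : P ⊕ L, (IncGraph I).dist a b ≤ 5)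
  (huniq : ∀ a b : P ⊕ L, (IncGraph I).dist a b < 5 →
      ∀ w₁ w₂ : (IncGraph I).Walk a b,
        w₁.length = (IncGraph I).dist a b → w₂.length = (IncGraph I).dist a b →
        w₁ = w₂)

include hconn huniq

/-- Uniqueness of the line through two distinct points. -/
lemma unique_line {p p' : P} {l m : L} (hne : p ≠ p')
    (hpl : I p l) (hp'l : I p' l) (hpm : I p m) (hp'm : I p' m) : l = m := by
  set w₁ : (IncGraph I).Walk (Sum.inl p) (Sum.inl p') :=
    SimpleGraph.Walk.cons (adj_mk hpl) (SimpleGraph.Walk.cons (adj_mk' hp'l)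
      SimpleGraph.Walk.nil) with hw₁
  set w₂ : (IncGraph I).Walk (Sum.inl p) (Sum.inl p') :=
    SimpleGraph.Walk.cons (adj_mk hpm) (SimpleGraph.Walk.cons (adj_mk' hp'm)
      SimpleGraph.Walk.nil) with hw₂
  have hd : (IncGraph I).dist (Sum.inl p) (Sum.inl p') = 2 := by
    have h1 : (IncGraph I).dist (Sum.inl p) (Sum.inl p') ≤ 2 := by
      simpa [hw₁] using SimpleGraph.dist_le w₁
    have h2 : 0 < (IncGraph I).dist (Sum.inl p) (Sum.inl p') :=
      (hconn _ _).pos_dist_of_ne (by simp [hne])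
    obtain ⟨c, hc⟩ := dist_pp_even hconn p p'
    omega
  have := huniq _ _ (by omega) w₁ w₂ (by simp [hw₁, hd]) (by simp [hw₂, hd])
  have h1 := congrArg (fun w => SimpleGraph.Walk.getVert w 1) this
  simpa [hw₁, hw₂, SimpleGraph.Walk.getVert_cons_one] using h1

end

end IncGraph

namespace IncGraph

variable {P L : Type*} {I : P → L → Prop}

section

variable (hconn : ∀ a b : P ⊕ L, (IncGraph I).Reachable a b)
  (hdiam : ∀ a b : P ⊕ L, (IncGraph I).dist a b ≤ 5)
  (huniq : ∀ a b : P ⊕ L, (IncGraph I).dist a b < 5 →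
      ∀ w₁ w₂ : (IncGraph I).Walk a b,
        w₁.length = (IncGraph I).dist a b → w₂.length = (IncGraph I).dist a b →
        w₁ = w₂)

include hconn hdiam huniq

lemma dist_four {p p' : P} (hne : p ≠ p') (hncol : ¬ Col I p p') :
    (IncGraph I).dist (Sum.inl p) (Sum.inl p') = 4 := by
  have h5 := hdiam (Sum.inl p) (Sum.inl p')
  have h2 : 0 < (IncGraph I).dist (Sum.inl p) (Sum.inl p') :=
    (hconn _ _).pos_dist_of_ne (by simp [hne])
  obtain ⟨c, hc⟩ := dist_pp_even hconn p p'
  have hn2 : (IncGraph I).dist (Sum.inl p) (Sum.inl p') ≠ 2 := by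
    intro hd
    obtain ⟨w, hw⟩ := (hconn (Sum.inl p) (Sum.inl p')).exists_walk_length_eq_dist
    rw [hd] at hw
    have ha1 : (IncGraph I).Adj (Sum.inl p) (w.getVert 1) := by
      simpa using w.adj_getVert_succ (i := 0) (by omega)
    have ha2 : (IncGraph I).Adj (w.getVert 1) (Sum.inl p') := by
      have := w.adj_getVert_succ (i := 1) (by omega)
      rwa [show w.getVert 2 = Sum.inl p' from hw ▸ w.getVert_length] at this
    obtain ⟨l, hcl, hpl⟩ := adj_inl ha1
    rw [hcl] at ha2
    obtain ⟨p'', hp'', hIl⟩ := adj_inr ha2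
    obtain rfl : p' = p'' := by simpa using hp''
    exact hncol ⟨l, hpl, hIl⟩
  omega

/-- For two distinct non-collinear points there is a unique point collinear with both. -/
lemma opp_unique {p p' : P} (hne : p ≠ p') (hncol : ¬ Col I p p') :
    ∃! x : P, x ≠ p ∧ x ≠ p' ∧ Col I p x ∧ Col I x p' := by
  have hd := dist_four hconn hdiam huniq hne hncol
  -- existence
  obtain ⟨w, hw⟩ := (hconn (Sum.inl p) (Sum.inl p')).exists_walk_length_eq_dist
  rw [hd] at hw
  have ha1 : (IncGraph I).Adj (Sum.inl p) (w.getVert 1) :=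
    (by simpa using w.adj_getVert_succ (i := 0) (by omega))
  have ha2 := w.adj_getVert_succ (i := 1) (by omega : 1 < w.length)
  have ha3 := w.adj_getVert_succ (i := 2) (by omega : 2 < w.length)
  have ha4 := w.adj_getVert_succ (i := 3) (by omega : 3 < w.length)
  rw [show w.getVert 4 = Sum.inl p' from by rw [← hw]; exact w.getVert_length] at ha4
  obtain ⟨l, hc1, hpl⟩ := adj_inl ha1
  rw [hc1] at ha2
  obtain ⟨x, hc2, hxl⟩ := adj_inr ha2
  rw [hc2] at ha3
  obtain ⟨l', hc3, hxl'⟩ := adj_inl ha3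
  rw [hc3] at ha4
  obtain ⟨p'', hp'', hIl'⟩ := adj_inr ha4
  obtain rfl : p' = p'' := by simpa using hp''
  have hxp : x ≠ p := by rintro rfl; exact hncol ⟨l', hxl', hIl'⟩
  have hxp' : x ≠ p' := by rintro rfl; exact hncol ⟨l, hpl, hxl⟩
  refine ⟨x, ⟨hxp, hxp', ⟨l, hpl, hxl⟩, ⟨l', hxl', hIl'⟩⟩, ?_⟩
  -- uniqueness
  rintro y ⟨hyp, hyp', ⟨m, hpm, hym⟩, ⟨m', hym', hp'm'⟩⟩
  -- walk through y
  set wy : (IncGraph I).Walk (Sum.inl p) (Sum.inl p') :=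
    SimpleGraph.Walk.cons (adj_mk hpm) (SimpleGraph.Walk.cons (adj_mk' hym)
      (SimpleGraph.Walk.cons (adj_mk hym') (SimpleGraph.Walk.cons (adj_mk' hp'm')
        SimpleGraph.Walk.nil))) with hwy
  have heq := huniq _ _ (by omega) wy w (by simp [hwy, hd]) (by rw [hw, hd])
  have h2 := congrArg (fun w => SimpleGraph.Walk.getVert w 2) heq
  simp only [hwy, SimpleGraph.Walk.getVert_cons_succ, SimpleGraph.Walk.getVert_cons_one,
    SimpleGraph.Walk.getVert_zero] at h2
  have hc2' : w.getVert 2 = Sum.inl x := hc2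
  rw [hc2'] at h2
  simpa using h2

omit hdiam in
/-- Any point collinear with two distinct points of a line lies on that line. -/
lemma common_on_line {p p' x : P} {l : L} (hne : p ≠ p') (hpl : I p l) (hp'l : I p' l)
    (_hxp : x ≠ p) (_hxp' : x ≠ p') (h1 : Col I p x) (h2 : Col I x p') : I x l := by
  by_contra hxl
  obtain ⟨m, hpm, hxm⟩ := h1
  obtain ⟨m', hxm', hp'm'⟩ := h2
  set w₁ : (IncGraph I).Walk (Sum.inr l) (Sum.inl x) :=
    SimpleGraph.Walk.cons (adj_mk' hpl) (SimpleGraph.Walk.cons (adj_mk hpm)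
      (SimpleGraph.Walk.cons (adj_mk' hxm) SimpleGraph.Walk.nil)) with hw₁
  set w₂ : (IncGraph I).Walk (Sum.inr l) (Sum.inl x) :=
    SimpleGraph.Walk.cons (adj_mk' hp'l) (SimpleGraph.Walk.cons (adj_mk hp'm')
      (SimpleGraph.Walk.cons (adj_mk' hxm') SimpleGraph.Walk.nil)) with hw₂
  have hd : (IncGraph I).dist (Sum.inr l) (Sum.inl x) = 3 := by
    have hle : (IncGraph I).dist (Sum.inr l) (Sum.inl x) ≤ 3 := by
      simpa [hw₁] using SimpleGraph.dist_le w₁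
    have hodd := dist_lp_odd hconn l x
    have hne1 : (IncGraph I).dist (Sum.inr l) (Sum.inl x) ≠ 1 := by
      intro hd1
      exact hxl (by
        have := (SimpleGraph.dist_eq_one_iff_adj).1 hd1
        obtain ⟨p'', hp'', hI⟩ := adj_inr this
        obtain rfl : x = p'' := by simpa using hp''
        exact hI)
    rcases Nat.even_or_odd ((IncGraph I).dist (Sum.inr l) (Sum.inl x)) with he | ho
    · exact absurd he hodd
    · obtain ⟨c, hc⟩ := ho; omega
  have heq := huniq _ _ (by omega) w₁ w₂ (by simp [hw₁, hd]) (by simp [hw₂, hd])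
  have h1 := congrArg (fun w => SimpleGraph.Walk.getVert w 1) heq
  simp only [hw₁, hw₂, SimpleGraph.Walk.getVert_cons_one] at h1
  exact hne (by simpa using h1)

end

end IncGraph

namespace IncGraph

variable {P L : Type*} {I : P → L → Prop}

section Counting

variable [Fintype P] [Fintype L] {q : ℕ}

open Finset in
lemma deg_count
    (hlines : ∀ l : L, Nat.card {p : P // I p l} = q + 1)
    (hpoints : ∀ p : P, Nat.card {l : L // I p l} = q + 1)
    (hUL : ∀ {p p' : P} {l m : L}, p ≠ p' → I p l → I p' l → I p m → I p' m → l = m)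
    (p : P) :
    Nat.card {x : P // x ≠ p ∧ Col I p x} = q ^ 2 + q := by
  classical
  rw [Nat.card_eq_fintype_card, Fintype.card_subtype]
  have key : (Finset.univ.filter fun x : P => x ≠ p ∧ Col I p x) =
      (Finset.univ.filter fun l : L => I p l).biUnion
        (fun l => Finset.univ.filter fun x : P => I x l ∧ x ≠ p) := by
    ext x
    simp only [Finset.mem_filter, Finset.mem_biUnion, Finset.mem_univ, true_and]
    constructor
    · rintro ⟨hne, l, hpl, hxl⟩; exact ⟨l, hpl, hxl, hne⟩
    · rintro ⟨l, hpl, hxl, hne⟩; exact ⟨hne, l, hpl, hxl⟩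
  rw [key, Finset.card_biUnion]
  · have hcl : ∀ l ∈ Finset.univ.filter fun l : L => I p l,
        (Finset.univ.filter fun x : P => I x l ∧ x ≠ p).card = q := by
      intro l hl
      have hpl : I p l := by simpa using hl
      have hflt : (Finset.univ.filter fun x : P => I x l ∧ x ≠ p) =
          (Finset.univ.filter fun x : P => I x l).erase p := by
        ext x
        simp [Finset.mem_erase, and_comm]
      have hcard : (Finset.univ.filter fun x : P => I x l).card = q + 1 := by
        rw [← Fintype.card_subtype, ← Nat.card_eq_fintype_card]
        exact hlines l
      rw [hflt, Finset.card_erase_of_mem (by simp [hpl]), hcard]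
      omega
    rw [Finset.sum_congr rfl hcl, Finset.sum_const, smul_eq_mul]
    have hcard : (Finset.univ.filter fun l : L => I p l).card = q + 1 := by
      rw [← Fintype.card_subtype, ← Nat.card_eq_fintype_card]
      exact hpoints p
    rw [hcard]; ring
  · intro l₁ h₁ l₂ h₂ hne
    rw [Function.onFun, Finset.disjoint_left]
    intro x hx₁ hx₂
    simp only [Finset.coe_filter, Set.mem_setOf_eq, Finset.mem_filter, Finset.mem_univ, true_and] at h₁ h₂ hx₁ hx₂
    exact hne (hUL (fun h => hx₁.2 h.symm) h₁ hx₁.1 h₂ hx₂.1)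

open Finset in
lemma lam_count
    (hlines : ∀ l : L, Nat.card {p : P // I p l} = q + 1)
    (hCL : ∀ {p p' x : P} {l : L}, p ≠ p' → I p l → I p' l → x ≠ p → x ≠ p' →
      Col I p x → Col I x p' → I x l)
    {p p' : P} {l0 : L} (hne : p ≠ p') (h1 : I p l0) (h2 : I p' l0) :
    Nat.card {x : P // (x ≠ p ∧ Col I p x) ∧ (p' ≠ x ∧ Col I x p')} = q - 1 := by
  classical
  rw [Nat.card_eq_fintype_card, Fintype.card_subtype]
  have key : (Finset.univ.filter fun x : P => (x ≠ p ∧ Col I p x) ∧ (p' ≠ x ∧ Col I x p')) =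
      ((Finset.univ.filter fun x : P => I x l0).erase p).erase p' := by
    ext x
    simp only [Finset.mem_filter, Finset.mem_univ, true_and, Finset.mem_erase]
    constructor
    · rintro ⟨⟨hxp, hcol1⟩, hxp', hcol2⟩
      exact ⟨fun h => hxp' h.symm, hxp, hCL hne h1 h2 hxp (fun h => hxp' h.symm) hcol1 hcol2⟩
    · rintro ⟨hxp', hxp, hxl⟩
      exact ⟨⟨hxp, ⟨l0, h1, hxl⟩⟩, fun h => hxp' h.symm, ⟨l0, hxl, h2⟩⟩
  have hcard : (Finset.univ.filter fun x : P => I x l0).card = q + 1 := by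
    rw [← Fintype.card_subtype, ← Nat.card_eq_fintype_card]
    exact hlines l0
  rw [key, Finset.card_erase_of_mem (by simp [Finset.mem_erase, h2, hne.symm]),
    Finset.card_erase_of_mem (by simp [h1]), hcard]
  omega

omit [Fintype L] in
open Finset in
lemma mu_count
    (hOU : ∃! x : P, x ≠ p ∧ x ≠ p' ∧ Col I p x ∧ Col I x p') :
    Nat.card {x : P // (x ≠ p ∧ Col I p x) ∧ (p' ≠ x ∧ Col I x p')} = 1 := by
  classical
  rw [Nat.card_eq_fintype_card, Fintype.card_subtype]
  obtain ⟨x₀, ⟨hx1, hx2, hx3, hx4⟩, huniq⟩ := hOU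
  rw [Finset.card_eq_one]
  refine ⟨x₀, ?_⟩
  rw [Finset.eq_singleton_iff_unique_mem]
  constructor
  · simp only [Finset.mem_filter, Finset.mem_univ, true_and]
    exact ⟨⟨hx1, hx3⟩, fun h => hx2 h.symm, hx4⟩
  · intro y hy
    simp only [Finset.mem_filter, Finset.mem_univ, true_and] at hy
    exact huniq y ⟨hy.1.1, fun h => hy.2.1 h.symm, hy.1.2, hy.2.2⟩

end Counting

end IncGraph

open Matrix in
/-- The spectral argument: a strongly-regular-type graph with parameters
`k = q² + q`, `λ = q - 1`, `μ = 1` cannot exist for `q ≥ 2`. -/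
lemma srg_contradiction {P : Type*} [Fintype P] [Nonempty P] (q : ℕ) (hq : 2 ≤ q)
    (C : P → P → Prop) (hsymm : ∀ p p', C p p' → C p' p)
    (hdeg : ∀ p : P, Nat.card {x : P // x ≠ p ∧ C p x} = q ^ 2 + q)
    (hlam : ∀ p p' : P, p ≠ p' → C p p' →
      Nat.card {x : P // (x ≠ p ∧ C p x) ∧ (p' ≠ x ∧ C x p')} = q - 1)
    (hmu : ∀ p p' : P, p ≠ p' → ¬ C p p' →
      Nat.card {x : P // (x ≠ p ∧ C p x) ∧ (p' ≠ x ∧ C x p')} = 1) :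
    False := by
  classical
  set k : ℝ := (q : ℝ) ^ 2 + q with hk
  set aa : ℝ := (q : ℝ) - 2 with haa
  set cc : ℝ := (q : ℝ) ^ 2 + q - 1 with hcc
  set M : Matrix P P ℝ := Matrix.of (fun p x => if x ≠ p ∧ C p x then (1 : ℝ) else 0) with hM
  set J : Matrix P P ℝ := Matrix.of (fun _ _ => (1 : ℝ)) with hJ
  have hcardconv : ∀ (pr : P → Prop) [DecidablePred pr],
      (Finset.univ.filter pr).card = Nat.card {x : P // pr x} := by
    intro pr _
    rw [Nat.card_eq_fintype_card, Fintype.card_subtype]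
  -- row sums
  have hsum : ∀ p : P, ∑ x, M p x = k := by
    intro p
    have hterm : ∀ x, M p x = if x ≠ p ∧ C p x then (1:ℝ) else 0 := fun x => rfl
    rw [Finset.sum_congr rfl (fun x _ => hterm x), Finset.sum_boole, hcardconv, hdeg p]
    push_cast
    rw [hk]
  -- symmetry
  have hH : M.IsHermitian := by
    ext i j
    simp only [Matrix.conjTranspose_apply, hM, Matrix.of_apply, star_trivial]
    by_cases h : j ≠ i ∧ C i j
    · rw [if_pos h, if_pos ⟨fun e => h.1 e.symm, hsymm _ _ h.2⟩]
    · rw [if_neg h, if_neg (fun h' => h ⟨fun e => h'.1 e.symm, hsymm _ _ h'.2⟩)]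
  -- the quadratic matrix identity
  have hM2 : M * M = aa • M + cc • 1 + J := by
    ext p p''
    rw [Matrix.mul_apply]
    have hterm : ∀ x, M p x * M x p'' =
        if (x ≠ p ∧ C p x) ∧ (p'' ≠ x ∧ C x p'') then (1:ℝ) else 0 := by
      intro x
      by_cases h1 : x ≠ p ∧ C p x <;> by_cases h2 : p'' ≠ x ∧ C x p'' <;>
        simp [hM, h1, h2]
    rw [Finset.sum_congr rfl (fun x _ => hterm x), Finset.sum_boole, hcardconv]
    by_cases hpe : p = p''
    · subst hpe
      have hiff : ∀ x : P, ((x ≠ p ∧ C p x) ∧ (p ≠ x ∧ C x p)) ↔ (x ≠ p ∧ C p x) := by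
        intro x
        constructor
        · rintro ⟨h, -⟩; exact h
        · rintro ⟨h1, h2⟩; exact ⟨⟨h1, h2⟩, fun e => h1 e.symm, hsymm _ _ h2⟩
      rw [Nat.card_eq_of_bijective _ ((Equiv.subtypeEquivRight hiff).bijective), hdeg p]
      have hMpp : M p p = 0 := by simp [hM]
      simp only [Matrix.add_apply, Matrix.smul_apply, Matrix.one_apply_eq, hMpp, hJ,
        Matrix.of_apply, smul_eq_mul, mul_zero, mul_one]
      push_cast
      rw [hcc]; ring
    · have hMpp : M p p'' = if p'' ≠ p ∧ C p p'' then (1:ℝ) else 0 := rfl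
      by_cases hcol : C p p''
      · rw [hlam p p'' hpe hcol]
        have hone : M p p'' = 1 := by
          rw [hMpp, if_pos ⟨fun e => hpe e.symm, hcol⟩]
        simp only [Matrix.add_apply, Matrix.smul_apply, Matrix.one_apply_ne hpe, hone, hJ,
          Matrix.of_apply, smul_eq_mul, mul_zero, mul_one]
        have h1q : 1 ≤ q := by omega
        push_cast [h1q]
        rw [haa]; ring
      · rw [hmu p p'' hpe hcol]
        have hzero : M p p'' = 0 := by
          rw [hMpp, if_neg (fun h => hcol h.2)]
        simp only [Matrix.add_apply, Matrix.smul_apply, Matrix.one_apply_ne hpe, hzero, hJ,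
          Matrix.of_apply, smul_eq_mul, mul_zero, Nat.cast_one]
        ring
  -- (M - k·1) J = 0
  have hMJ : (M - k • 1) * J = 0 := by
    ext p p''
    rw [Matrix.mul_apply]
    simp only [Matrix.sub_apply, Matrix.smul_apply, hJ, Matrix.of_apply, mul_one,
      smul_eq_mul, Matrix.zero_apply]
    rw [Finset.sum_sub_distrib, hsum p]
    simp [Matrix.one_apply]
  -- the factored identity
  have hfact : (M - k • 1) * (M * M - aa • M - cc • 1) = 0 := by
    have hJ' : M * M - aa • M - cc • 1 = J := by rw [hM2]; abel
    rw [hJ', hMJ]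
  -- eigenvalues
  set μ : P → ℝ := hH.eigenvalues with hμ
  have hroot : ∀ i, (μ i - k) * ((μ i) ^ 2 - aa * μ i - cc) = 0 := by
    intro i
    set v : P → ℝ := ⇑(hH.eigenvectorBasis i) with hv
    have hvne : v ≠ 0 := by
      intro h0
      apply hH.eigenvectorBasis.orthonormal.ne_zero i
      ext x
      exact congrFun h0 x
    have hMv : M *ᵥ v = μ i • v := hH.mulVec_eigenvectorBasis i
    have hinner : (M * M - aa • M - cc • 1) *ᵥ v = ((μ i) ^ 2 - aa * μ i - cc) • v := by
      rw [Matrix.sub_mulVec, Matrix.sub_mulVec, ← Matrix.mulVec_mulVec, hMv,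
        Matrix.mulVec_smul, hMv, Matrix.smul_mulVec, hMv, Matrix.smul_mulVec,
        Matrix.one_mulVec, smul_smul]
      module
    have houter : ((M - k • 1) * (M * M - aa • M - cc • 1)) *ᵥ v =
        ((μ i - k) * ((μ i) ^ 2 - aa * μ i - cc)) • v := by
      rw [← Matrix.mulVec_mulVec, hinner, Matrix.mulVec_smul, Matrix.sub_mulVec, hMv,
        Matrix.smul_mulVec, Matrix.one_mulVec]
      module
    rw [hfact, Matrix.zero_mulVec] at houter
    rcases smul_eq_zero.mp houter.symm with h | h
    · exact h
    · exact absurd h hvne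
  -- trace is zero
  have htr : ∑ i, μ i = 0 := by
    have h1 : M.trace = 0 := by
      have : ∀ p, M p p = 0 := fun p => by simp [hM]
      simp [Matrix.trace, Matrix.diag, this]
    have h2 : M.trace = ∑ i, μ i := by
      rw [hH.trace_eq_sum_eigenvalues]
      simp [hμ]
    rw [← h2, h1]
  -- k is an eigenvalue
  have hkeig : ∃ i, μ i = k := by
    have hvec : ((algebraMap ℝ (Matrix P P ℝ)) k - M) *ᵥ (fun _ => 1) = 0 := by
      rw [Algebra.algebraMap_eq_smul_one, Matrix.sub_mulVec, Matrix.smul_mulVec,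
        Matrix.one_mulVec]
      have hMv1 : M *ᵥ (fun _ => (1:ℝ)) = fun _ => k := by
        funext p
        simp only [Matrix.mulVec, dotProduct, mul_one]
        exact hsum p
      rw [hMv1]
      funext p
      simp
    have hdet0 : ((algebraMap ℝ (Matrix P P ℝ)) k - M).det = 0 := by
      rw [← Matrix.exists_mulVec_eq_zero_iff]
      refine ⟨fun _ => 1, ?_, hvec⟩
      intro h
      have := congrFun h (Classical.arbitrary P)
      norm_num at this
    have hnu : ¬ IsUnit ((algebraMap ℝ (Matrix P P ℝ)) k - M) := by
      rw [Matrix.isUnit_iff_isUnit_det, hdet0]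
      exact not_isUnit_zero
    have hks : k ∈ spectrum ℝ M := spectrum.mem_iff.mpr hnu
    rw [Matrix.IsHermitian.spectrum_real_eq_range_eigenvalues hH] at hks
    obtain ⟨i, hi⟩ := hks
    exact ⟨i, hi⟩
  -- roots of the quadratic
  set s5 : ℝ := Real.sqrt 5 with hs5def
  have hs5 : s5 ^ 2 = 5 := Real.sq_sqrt (by norm_num)
  have hs5irr : Irrational s5 := by
    simpa using (by norm_num : Nat.Prime 5).irrational_sqrt
  set θ : ℝ := (aa + q * s5) / 2 with hθ
  set τ : ℝ := (aa - q * s5) / 2 with hτ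
  have hclass : ∀ i, μ i = k ∨ μ i = θ ∨ μ i = τ := by
    intro i
    rcases mul_eq_zero.mp (hroot i) with h | h
    · exact Or.inl (by linarith [sub_eq_zero.mp h])
    · have hsq : (2 * μ i - aa) ^ 2 = ((q : ℝ) * s5) ^ 2 := by
        have h5 : s5 ^ 2 = 5 := hs5
        rw [haa] at *
        nlinarith [h]
      rcases sq_eq_sq_iff_eq_or_eq_neg.mp hsq with h2 | h2
      · right; left; rw [hθ]; linarith
      · right; right; rw [hτ]; linarith
  -- partition the index set
  set T : Finset P := Finset.univ.filter (fun i => μ i = k) with hT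
  set B : Finset P := Finset.univ.filter (fun i => ¬ μ i = k ∧ μ i = θ) with hB
  set Cs : Finset P := Finset.univ.filter (fun i => ¬ μ i = k ∧ ¬ μ i = θ) with hCs
  have hsplit : ∑ i, μ i = T.card • k + B.card • θ + Cs.card • τ := by
    rw [← Finset.sum_filter_add_sum_filter_not Finset.univ (fun i => μ i = k) μ]
    have hsplit2 : ∑ i ∈ Finset.univ.filter (fun i => ¬ μ i = k), μ i =
        B.card • θ + Cs.card • τ := by
      rw [← Finset.sum_filter_add_sum_filter_not (Finset.univ.filter (fun i => ¬ μ i = k))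
        (fun i => μ i = θ) μ, Finset.filter_filter, Finset.filter_filter]
      congr 1
      · rw [Finset.sum_congr rfl (fun i hi => (Finset.mem_filter.mp hi).2.2),
          Finset.sum_const]
      · rw [hCs]
        have : ∀ i ∈ Finset.univ.filter (fun i => ¬ μ i = k ∧ ¬ μ i = θ), μ i = τ := by
          intro i hi
          have h := Finset.mem_filter.mp hi
          rcases hclass i with h1 | h1 | h1
          · exact absurd h1 h.2.1
          · exact absurd h1 h.2.2
          · exact h1
        rw [Finset.sum_congr rfl this, Finset.sum_const]
    rw [hsplit2, Finset.sum_congr rfl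
      (fun i hi => (Finset.mem_filter.mp hi).2), Finset.sum_const, add_assoc]
  -- final contradiction
  rw [htr] at hsplit
  set t := T.card with ht
  set b := B.card with hb
  set c := Cs.card with hc
  have htpos : 1 ≤ t := by
    obtain ⟨i, hi⟩ := hkeig
    rw [ht]
    exact Finset.card_pos.mpr ⟨i, Finset.mem_filter.mpr ⟨Finset.mem_univ i, hi⟩⟩
  have heq : 0 = (t : ℝ) * k + (b : ℝ) * θ + (c : ℝ) * τ := by
    rw [hsplit]
    simp [nsmul_eq_mul]
  have hbc : b = c := by
    by_contra hne
    have hz : ((b : ℝ) - c) * q ≠ 0 := by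
      have : (b : ℝ) ≠ c := by exact_mod_cast hne
      have hq0 : (q : ℝ) ≠ 0 := by positivity
      exact mul_ne_zero (sub_ne_zero.mpr this) hq0
    have hrat : (((b : ℝ) - c) * q) * s5 = -(2 * t * k + ((b : ℝ) + c) * aa) := by
      rw [hθ, hτ] at heq
      ring_nf at heq ⊢
      linarith [heq]
    have : Irrational ((((b : ℝ) - c) * q) * s5) := by
      have hrat2 : (((b : ℝ) - c) * q) = ((((b:ℤ) - c) * q : ℤ) : ℝ) := by push_cast; ring
      rw [hrat2]
      refine (Irrational.intCast_mul hs5irr ?_)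
      intro h
      apply hz
      rw [hrat2, h]
      simp
    rw [hrat] at this
    apply this
    have : (-(2 * (t:ℝ) * k + ((b : ℝ) + c) * aa)) =
        (((-(2 * (t:ℤ) * (q^2 + q) + ((b:ℤ) + c) * (q - 2))) : ℤ) : ℝ) := by
      rw [hk, haa]; push_cast; ring
    rw [this]
    exact ⟨(-(2 * (t:ℤ) * (q^2 + q) + ((b:ℤ) + c) * ((q:ℤ) - 2)) : ℚ), by push_cast; norm_num⟩
  rw [hbc] at heq
  have hθτ : θ + τ = aa := by rw [hθ, hτ]; ring
  have heq2 : 0 = (t : ℝ) * k + (c : ℝ) * aa := by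
    linear_combination heq + (c:ℝ) * hθτ
  have hkpos : (0 : ℝ) < k := by
    rw [hk]
    have : (2 : ℝ) ≤ q := by exact_mod_cast hq
    nlinarith
  have haapos : (0 : ℝ) ≤ aa := by
    rw [haa]
    have : (2 : ℝ) ≤ q := by exact_mod_cast hq
    linarith
  have htpos' : (1 : ℝ) ≤ t := by exact_mod_cast htpos
  nlinarith [heq2, hkpos, haapos, htpos', mul_nonneg (Nat.cast_nonneg c : (0:ℝ) ≤ (c:ℝ)) haapos]

/-- odd case of the Feit–Higman theorem: there is no generalized pentagon
with parameters `q, q` for `q ≥ 2`, i.e. no generalized 5-gon in which every line has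
`q+1` points and every point is on `q+1` lines.  A generalized 5-gon is axiomatized via
its incidence graph: it is connected of diameter 5 with a unique shortest path between
any two objects at distance less than 5. -/
theorem no_generalized_pentagon
    (q : ℕ) (hq : 2 ≤ q)
    (P L : Type*) [Finite P] [Finite L] [Nonempty P]
    (I : P → L → Prop)
    (hlines : ∀ l : L, Nat.card {p : P // I p l} = q + 1)
    (hpoints : ∀ p : P, Nat.card {l : L // I p l} = q + 1)
    (hconn : ∀ a b : P ⊕ L, (IncGraph I).Reachable a b)
    (hdiam : ∀ a b : P ⊕ L, (IncGraph I).dist a b ≤ 5)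
    (hmax : ∃ a b : P ⊕ L, (IncGraph I).dist a b = 5)
    (huniq : ∀ a b : P ⊕ L, (IncGraph I).dist a b < 5 →
        ∀ w₁ w₂ : (IncGraph I).Walk a b,
          w₁.length = (IncGraph I).dist a b → w₂.length = (IncGraph I).dist a b →
          w₁ = w₂) :
    False := by
  classical
  haveI : Fintype P := Fintype.ofFinite P
  haveI : Fintype L := Fintype.ofFinite L
  refine srg_contradiction q hq (Col I) ?_ ?_ ?_ ?_
  · rintro p p' ⟨l, h1, h2⟩
    exact ⟨l, h2, h1⟩
  · exact IncGraph.deg_count hlines hpoints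
      (fun hne h1 h2 h3 h4 => IncGraph.unique_line hconn huniq hne h1 h2 h3 h4)
  · rintro p p' hne ⟨l0, h1, h2⟩
    exact IncGraph.lam_count hlines
      (fun hne' h1' h2' hx1 hx2 hc1 hc2 =>
        IncGraph.common_on_line hconn huniq hne' h1' h2' hx1 hx2 hc1 hc2) hne h1 h2
  · intro p p' hne hncol
    exact IncGraph.mu_count (IncGraph.opp_unique hconn hdiam huniq hne hncol)
end

section
/- Let Ω be the set of singular points of a nondegenerate quadric of type O⁺(2r,q), r ≥ 3, and let Φ ⊆ Ω be a set such that for every maximal totally singular subspace U (of dimension r), Φ ∩ U is the point set of an (r−1)-dimensional subspace of U. Then Φ = Ω ∩ v^⊥ for some nonsingular vector v. -/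
open Module

section Helpers
variable {F : Type*} [Field F]
variable {U : Type*} [AddCommGroup U] [Module F U] [FiniteDimensional F U]

lemma dual_sep {p : Submodule F U} {x : U} (hx : x ∉ p) :
    ∃ f : Dual F U, f x ≠ 0 ∧ ∀ y ∈ p, f y = 0 := by
  obtain ⟨f, h1, h2⟩ := p.exists_dual_map_eq_bot_of_notMem hx inferInstance
  refine ⟨f, h1, fun y hy => ?_⟩
  have : f y ∈ p.map f := ⟨y, hy, rfl⟩
  simpa [h2] using this

lemma mem_span_of_dual {x z : U} (h : ∀ f : Dual F U, f x = 0 → f z = 0) :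
    z ∈ Submodule.span F {x} := by
  by_contra hz
  obtain ⟨f, hf1, hf2⟩ := dual_sep hz
  exact hf1 (h f (hf2 x (Submodule.mem_span_singleton_self x)))

omit [FiniteDimensional F U] in
lemma nmem_span_singleton_symm {a u : U} (ha : a ≠ 0) (hu : u ∉ Submodule.span F {a}) :
    a ∉ Submodule.span F {u} := by
  intro h
  obtain ⟨k, hk⟩ := Submodule.mem_span_singleton.mp h
  have hk0 : k ≠ 0 := by rintro rfl; simp at hk; exact ha hk.symm
  exact hu (Submodule.mem_span_singleton.mpr ⟨k⁻¹, by rw [← hk, smul_smul, inv_mul_cancel₀ hk0, one_smul]⟩)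

lemma finrank_submodule_prod {M M₂ : Type*} [AddCommGroup M] [AddCommGroup M₂]
    [Module F M] [Module F M₂] [FiniteDimensional F M] [FiniteDimensional F M₂]
    (p : Submodule F M) (q : Submodule F M₂) :
    finrank F (p.prod q) = finrank F p + finrank F q := by
  have e : (p.prod q) ≃ₗ[F] (p × q) :=
    { toFun := fun x => (⟨x.1.1, x.2.1⟩, ⟨x.1.2, x.2.2⟩)
      map_add' := fun x y => rfl
      map_smul' := fun k x => rfl
      invFun := fun y => ⟨(y.1.1, y.2.1), ⟨y.1.2, y.2.2⟩⟩
      left_inv := fun x => rfl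
      right_inv := fun y => rfl }
  rw [e.finrank_eq, Module.finrank_prod]

lemma finrank_ker_eq {φ : Dual F U} (hφ : φ ≠ 0) :
    finrank F (LinearMap.ker φ) = finrank F U - 1 := by
  have h := LinearMap.finrank_range_add_finrank_ker φ
  have hr : finrank F (LinearMap.range φ) = 1 := by
    have hne : LinearMap.range φ ≠ ⊥ := by
      simp only [ne_eq, LinearMap.range_eq_bot]; exact hφ
    have h1 : finrank F (LinearMap.range φ) ≤ finrank F F := Submodule.finrank_le _
    have h2 : finrank F (LinearMap.range φ) ≠ 0 := by
      rw [ne_eq, Submodule.finrank_eq_zero]; exact hne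
    have : finrank F F = 1 := Module.finrank_self F
    omega
  omega
end Helpers

section Avoid
variable {F : Type*} [Field F] [Fintype F]
variable {U : Type*} [AddCommGroup U] [Module F U] [FiniteDimensional F U]

lemma avoid3 (hr : 3 ≤ finrank F U) {a : U} (ha : a ≠ 0) (x1 x2 x3 : U) :
    ∃ y : U, y + x1 ∉ Submodule.span F {a} ∧ y + x2 ∉ Submodule.span F {a} ∧
      y + x3 ∉ Submodule.span F {a} := by
  classical
  have : Finite U := Module.finite_of_finite F
  have : Fintype U := Fintype.ofFinite U
  set L := Submodule.span F {a} with hL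
  by_contra h
  push_neg at h
  have hcov : ∀ y : U, y + x1 ∈ L ∨ y + x2 ∈ L ∨ y + x3 ∈ L := by
    intro y
    by_contra hy
    push_neg at hy
    obtain ⟨h1, h2, h3⟩ := hy
    exact h3 (h y h1 h2)
  have : Fintype ↥L := Fintype.ofFinite _
  have hcard : ∀ x : U, (Finset.univ.filter (fun y : U => y + x ∈ L)).card ≤ Fintype.card F := by
    intro x
    have hinj : Set.InjOn (fun y : U => (y + x : U)) ↑(Finset.univ.filter (fun y : U => y + x ∈ L)) := by
      intro p hp q hq hpq
      simpa using hpq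
    calc (Finset.univ.filter (fun y : U => y + x ∈ L)).card
        = ((Finset.univ.filter (fun y : U => y + x ∈ L)).image (fun y => y + x)).card := by
          rw [Finset.card_image_of_injOn hinj]
      _ ≤ (L : Set U).toFinset.card := by
          apply Finset.card_le_card
          intro z hz
          simp only [Finset.mem_image, Finset.mem_filter] at hz
          obtain ⟨y, ⟨_, hy⟩, rfl⟩ := hz
          simpa using hy
      _ = Fintype.card ↥L := by simp [Set.toFinset_card]
      _ = Fintype.card F := by
          rw [← Fintype.card_congr (LinearEquiv.toSpanNonzeroSingleton F U a ha).toEquiv]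
  have hU : Fintype.card U ≤ 3 * Fintype.card F := by
    have hsub : (Finset.univ : Finset U) ⊆ (Finset.univ.filter (fun y : U => y + x1 ∈ L)) ∪
        ((Finset.univ.filter (fun y : U => y + x2 ∈ L)) ∪ (Finset.univ.filter (fun y : U => y + x3 ∈ L))) := by
      intro y _
      rcases hcov y with h | h | h <;> simp [h]
    calc Fintype.card U = (Finset.univ : Finset U).card := rfl
      _ ≤ _ := Finset.card_le_card hsub
      _ ≤ _ := (Finset.card_union_le _ _).trans (by
          have := Finset.card_union_le (Finset.univ.filter (fun y : U => y + x2 ∈ L)) (Finset.univ.filter (fun y : U => y + x3 ∈ L))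
          have h1 := hcard x1; have h2 := hcard x2; have h3 := hcard x3
          omega)
  have hq : 2 ≤ Fintype.card F := Fintype.one_lt_card
  have hcardU : Fintype.card U = Fintype.card F ^ finrank F U := card_eq_pow_finrank
  set q := Fintype.card F
  have hp3 : q ^ 3 ≤ q ^ finrank F U := Nat.pow_le_pow_right (by omega) hr
  have h8 : q * q * q ≤ q ^ finrank F U := by
    calc q * q * q = q ^ 3 := by ring
    _ ≤ _ := hp3
  nlinarith [hU, hcardU, hq, h8]
end Avoid

section Part2
variable {F : Type*} [Field F] [Fintype F]
variable {U : Type*} [AddCommGroup U] [Module F U] [FiniteDimensional F U]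

set_option maxHeartbeats 2000000 in
theorem part2 (r : ℕ) (hr : 3 ≤ r) (hU : finrank F U = r)
    (G : U × Dual F U → Prop)
    (hchart : ∀ M : Submodule F (U × Dual F U),
        (∀ m ∈ M, m.2 m.1 = (0:F)) → finrank F M = r →
        ∃ ℓ : Dual F (U × Dual F U), (∃ m ∈ M, ℓ m ≠ 0) ∧
          ∀ m ∈ M, m ≠ 0 → (G m ↔ ℓ m = 0)) :
    ∃ (a : U) (ψ : Dual F U), ψ a ≠ 0 ∧
      ∀ (u : U) (φ : Dual F U), φ u = 0 → (u, φ) ≠ 0 →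
        (G (u, φ) ↔ ψ u + φ a = 0) := by
  classical
  have hdual : finrank F (Dual F U) = r := by rw [Subspace.dual_finrank_eq, hU]
  -- decomposition of functionals on the product
  have hdec : ∀ (ℓ : Dual F (U × Dual F U)) (x : U) (φ : Dual F U),
      ℓ (x, φ) = ℓ (x, 0) + ℓ (0, φ) := by
    intro ℓ x φ
    rw [← map_add]
    congr 1
    simp
  -- Chart U × 0
  obtain ⟨ℓU, ⟨mU, hmUmem, hmUne⟩, hUiff⟩ := hchart ((⊤ : Submodule F U).prod (⊥ : Submodule F (Dual F U)))
    (by rintro ⟨x, φ⟩ hm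
        rw [Submodule.mem_prod] at hm
        have : φ = 0 := hm.2
        simp [this])
    (by rw [finrank_submodule_prod, finrank_top, finrank_bot, hU]; ring)
  set ψ₀ : Dual F U := ℓU.comp (LinearMap.inl F U (Dual F U)) with hψ₀def
  have hψ₀app : ∀ x : U, ψ₀ x = ℓU (x, 0) := fun x => rfl
  have specU : ∀ u : U, u ≠ 0 → (G (u, 0) ↔ ψ₀ u = 0) := by
    intro u hu
    rw [hψ₀app]
    exact hUiff (u, 0) (by simp [Submodule.mem_prod]) (by simp [Prod.mk_eq_zero, hu])
  have hψ₀ne : ∃ x, ψ₀ x ≠ 0 := by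
    refine ⟨mU.1, ?_⟩
    have h2 : mU.2 = 0 := by
      rw [Submodule.mem_prod] at hmUmem; exact hmUmem.2
    rw [hψ₀app]
    have : (mU.1, (0 : Dual F U)) = mU := by rw [← h2]
    rw [this]; exact hmUne
  -- Chart 0 × Dual
  obtain ⟨ℓW, ⟨mW, hmWmem, hmWne⟩, hWiff⟩ := hchart ((⊥ : Submodule F U).prod (⊤ : Submodule F (Dual F U)))
    (by rintro ⟨x, φ⟩ hm
        rw [Submodule.mem_prod] at hm
        have : x = 0 := hm.1
        simp [this])
    (by rw [finrank_submodule_prod, finrank_top, finrank_bot, hdual]; ring)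
  set a₀ : U := (evalEquiv F U).symm (ℓW.comp (LinearMap.inr F U (Dual F U))) with ha₀def
  have ha₀app : ∀ φ : Dual F U, φ a₀ = ℓW (0, φ) := by
    intro φ
    rw [ha₀def, Module.apply_evalEquiv_symm_apply]
    rfl
  have specW : ∀ φ : Dual F U, φ ≠ 0 → (G (0, φ) ↔ φ a₀ = 0) := by
    intro φ hφ
    rw [ha₀app]
    exact hWiff (0, φ) (by simp [Submodule.mem_prod]) (by simp [Prod.mk_eq_zero, hφ])
  have ha₀ : a₀ ≠ 0 := by
    intro h0
    have h1 : mW.1 = 0 := by rw [Submodule.mem_prod] at hmWmem; exact hmWmem.1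
    have : mW.2 a₀ = ℓW (0, mW.2) := ha₀app mW.2
    rw [h0] at this
    simp only [map_zero] at this
    apply hmWne
    have hmW : mW = (0, mW.2) := by rw [← h1]
    rw [hmW, ← this]
  set L := Submodule.span F {a₀} with hLdef

  -- u-charts: for u outside L there is a unique normalized chart constant
  have hC1 : ∀ u, u ∉ L → ∃ cv : F, ∀ (t : F) (φ : Dual F U), φ u = 0 → (t ≠ 0 ∨ φ ≠ 0) →
      (G (t • u, φ) ↔ t * cv + φ a₀ = 0) := by
    intro u huL
    have hu0 : u ≠ 0 := fun h => huL (h ▸ Submodule.zero_mem L)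
    have ha₀u : a₀ ∉ Submodule.span F {u} := nmem_span_singleton_symm ha₀ huL
    -- eval at u is a nonzero functional on the dual
    have hev : ∃ f : Dual F U, f u ≠ 0 := by
      obtain ⟨f, hf, -⟩ := dual_sep (p := (⊥ : Submodule F U)) (by simpa using hu0)
      exact ⟨f, hf⟩
    have hevne : (Module.Dual.eval F U) u ≠ 0 := by
      intro h
      obtain ⟨f, hf⟩ := hev
      exact hf (by
        have := congrArg (fun g => g f) h
        simpa using this)
    obtain ⟨ℓ, ⟨mne, hmnemem, hmnene⟩, hiff⟩ := hchart
      ((Submodule.span F {u}).prod (LinearMap.ker ((Module.Dual.eval F U) u)))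
      (by rintro ⟨x, φ⟩ hm
          rw [Submodule.mem_prod] at hm
          obtain ⟨t, ht⟩ := Submodule.mem_span_singleton.mp hm.1
          have hφu : φ u = 0 := by
            have h2 := hm.2
            rwa [LinearMap.mem_ker, Module.Dual.eval_apply] at h2
          show φ x = 0
          have hx : x = t • u := ht.symm
          rw [hx, map_smul, smul_eq_mul, hφu, mul_zero])
      (by rw [finrank_submodule_prod, finrank_span_singleton hu0, finrank_ker_eq hevne, hdual]
          omega)
    set c' : F := ℓ (u, 0) with hc'def
    set α : U := (evalEquiv F U).symm (ℓ.comp (LinearMap.inr F U (Dual F U))) with hαdef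
    have hαapp : ∀ φ : Dual F U, φ α = ℓ (0, φ) := by
      intro φ
      rw [hαdef, Module.apply_evalEquiv_symm_apply]
      rfl
    have hℓeval : ∀ (t : F) (φ : Dual F U), ℓ (t • u, φ) = t * c' + φ α := by
      intro t φ
      rw [hdec, hαapp]
      congr 1
      have h1 : ((t • u : U), (0 : Dual F U)) = t • ((u, 0) : U × Dual F U) := by
        simp [Prod.smul_mk]
      rw [h1, map_smul, smul_eq_mul]
    have hαiff : ∀ φ : Dual F U, φ u = 0 → (φ α = 0 ↔ φ a₀ = 0) := by
      intro φ hφu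
      by_cases hφ : φ = 0
      · simp [hφ]
      · have h1 : G (0, φ) ↔ φ α = 0 := by
          rw [hαapp]
          exact hiff (0, φ) (by
            rw [Submodule.mem_prod]
            refine ⟨Submodule.zero_mem _, ?_⟩
            simp only [LinearMap.mem_ker, Module.Dual.eval_apply]
            exact hφu) (by simp [Prod.mk_eq_zero, hφ])
        rw [← h1, specW φ hφ]
    have hαu : α ∉ Submodule.span F {u} := by
      intro h
      obtain ⟨k, hk⟩ := Submodule.mem_span_singleton.mp h
      apply ha₀u
      apply mem_span_of_dual
      intro f hfu
      apply (hαiff f hfu).mp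
      rw [← hk, map_smul, smul_eq_mul, hfu, mul_zero]
    have hspan : a₀ ∈ Submodule.span F {u, α} := by
      by_contra h
      obtain ⟨f, hf1, hf2⟩ := dual_sep h
      have hfu : f u = 0 := hf2 u (Submodule.subset_span (by simp))
      have hfα : f α = 0 := hf2 α (Submodule.subset_span (by simp))
      exact hf1 ((hαiff f hfu).mp hfα)
    obtain ⟨p, q, hpq⟩ := Submodule.mem_span_pair.mp hspan
    have hq0 : q ≠ 0 := by
      rintro rfl
      apply ha₀u
      rw [Submodule.mem_span_singleton]
      exact ⟨p, by rw [← hpq]; simp⟩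
    refine ⟨q * c', ?_⟩
    intro t φ hφu hne
    have hmem : ((t • u : U), φ) ∈ (Submodule.span F {u}).prod (LinearMap.ker ((Module.Dual.eval F U) u)) := by
      rw [Submodule.mem_prod]
      refine ⟨Submodule.smul_mem _ _ (Submodule.mem_span_singleton_self u), ?_⟩
      simp only [LinearMap.mem_ker, Module.Dual.eval_apply]
      exact hφu
    have hne' : ((t • u : U), φ) ≠ 0 := by
      rw [ne_eq, Prod.mk_eq_zero, not_and_or]
      rcases hne with ht | hφ
      · exact Or.inl (smul_ne_zero ht hu0)
      · exact Or.inr hφ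
    rw [hiff _ hmem hne', hℓeval]
    have hφα : q * φ α = φ a₀ := by
      have := congrArg φ hpq
      simp only [map_add, map_smul, smul_eq_mul, hφu, mul_zero, zero_add] at this
      exact this
    constructor
    · intro h
      have : q * (t * c' + φ α) = 0 := by rw [h, mul_zero]
      calc t * (q * c') + φ a₀ = q * (t * c' + φ α) := by rw [← hφα]; ring
        _ = 0 := this
    · intro h
      have hq : q * (t * c' + φ α) = 0 := by
        calc q * (t * c' + φ α) = t * (q * c') + φ a₀ := by rw [← hφα]; ring
          _ = 0 := h
      rcases mul_eq_zero.mp hq with h' | h'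
      · exact absurd h' hq0
      · exact h'
  choose! c hc using hC1
  -- uniqueness of the chart constant
  have huniq : ∀ u, u ∉ L → ∀ cv : F, (∀ (t : F) (φ : Dual F U), φ u = 0 → (t ≠ 0 ∨ φ ≠ 0) →
      (G (t • u, φ) ↔ t * cv + φ a₀ = 0)) → cv = c u := by
    intro u huL cv hspec
    have ha₀u : a₀ ∉ Submodule.span F {u} := nmem_span_singleton_symm ha₀ huL
    obtain ⟨f, hf1, hf2⟩ := dual_sep ha₀u
    have hfu : f u = 0 := hf2 u (Submodule.mem_span_singleton_self u)
    set φ : Dual F U := ((f a₀)⁻¹ * (- c u)) • f with hφdef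
    have hφu : φ u = 0 := by rw [hφdef]; simp [hfu]
    have hφa₀ : φ a₀ = - c u := by
      rw [hφdef]
      simp only [LinearMap.smul_apply, smul_eq_mul]
      field_simp
    have hG : G ((1:F) • u, φ) := by
      rw [hc u huL 1 φ hφu (Or.inl one_ne_zero)]
      rw [hφa₀]; ring
    have := (hspec 1 φ hφu (Or.inl one_ne_zero)).mp hG
    rw [hφa₀] at this
    linear_combination this
  -- homogeneity
  have hHOM : ∀ u, u ∉ L → ∀ k : F, k ≠ 0 → c (k • u) = k * c u := by
    intro u huL k hk
    have hkuL : k • u ∉ L := fun h => huL ((Submodule.smul_mem_iff L hk).mp h)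
    refine (huniq (k • u) hkuL (k * c u) ?_).symm
    intro t φ hφku hne
    have hφu : φ u = 0 := by
      have : k * φ u = 0 := by
        have := hφku
        rwa [map_smul, smul_eq_mul] at this
      rcases mul_eq_zero.mp this with h | h
      · exact absurd h hk
      · exact h
    have h1 : (t • (k • u) : U) = (t * k) • u := by rw [smul_smul]
    rw [h1, hc u huL (t * k) φ hφu (by
      rcases hne with ht | hφ
      · exact Or.inl (mul_ne_zero ht hk)
      · exact Or.inr hφ)]
    constructor <;> intro h <;> linear_combination h

  have hneL : ∀ x : U, x ∉ L → x ≠ 0 := fun x hx h => hx (h ▸ Submodule.zero_mem L)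
  -- dual charts
  have hD1 : ∀ φ₀ : Dual F U, φ₀ ≠ 0 → ∃ (g : Dual F U) (d : F), (d = 0 ↔ φ₀ a₀ = 0) ∧
      ∀ x : U, φ₀ x = 0 → ∀ s : F, (x ≠ 0 ∨ s ≠ 0) → (G (x, s • φ₀) ↔ g x + s * d = 0) := by
    intro φ₀ hφ₀
    obtain ⟨ℓ, ⟨mne, hmem, hne⟩, hiff⟩ := hchart ((LinearMap.ker φ₀).prod (Submodule.span F {φ₀}))
      (by rintro ⟨x, φ⟩ hm
          rw [Submodule.mem_prod] at hm
          obtain ⟨s, hs⟩ := Submodule.mem_span_singleton.mp hm.2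
          have hφ₀x : φ₀ x = 0 := hm.1
          show φ x = 0
          have hφ : φ = s • φ₀ := hs.symm
          rw [hφ, LinearMap.smul_apply, hφ₀x, smul_zero])
      (by rw [finrank_submodule_prod, finrank_span_singleton hφ₀, finrank_ker_eq hφ₀, hU]
          omega)
    set g : Dual F U := ℓ.comp (LinearMap.inl F U (Dual F U)) with hgdef
    set d : F := ℓ (0, φ₀) with hddef
    have happ : ∀ (x : U) (s : F), ℓ (x, s • φ₀) = g x + s * d := by
      intro x s
      rw [hdec]
      congr 1
      have h1 : ((0 : U), s • φ₀) = s • ((0, φ₀) : U × Dual F U) := by simp [Prod.smul_mk]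
      rw [h1, map_smul, smul_eq_mul]
    have hiff' : ∀ x : U, φ₀ x = 0 → ∀ s : F, (x ≠ 0 ∨ s ≠ 0) → (G (x, s • φ₀) ↔ g x + s * d = 0) := by
      intro x hx s hns
      rw [← happ]
      refine hiff (x, s • φ₀) ?_ ?_
      · rw [Submodule.mem_prod]
        exact ⟨by simpa using hx, Submodule.smul_mem _ _ (Submodule.mem_span_singleton_self φ₀)⟩
      · rw [ne_eq, Prod.mk_eq_zero, not_and_or]
        rcases hns with hx0 | hs0
        · exact Or.inl hx0
        · exact Or.inr (smul_ne_zero hs0 hφ₀)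
    refine ⟨g, d, ?_, hiff'⟩
    have hG0 : G (0, φ₀) ↔ d = 0 := by
      have := hiff' 0 (map_zero φ₀) 1 (Or.inr one_ne_zero)
      rw [one_smul, map_zero, one_mul, zero_add] at this
      exact this
    rw [← hG0, specW φ₀ hφ₀]
  -- additivity, main case
  have hADD1 : ∀ u₁ u₂ : U, a₀ ∉ Submodule.span F {u₁, u₂} → u₁ ≠ 0 → u₂ ≠ 0 → u₁ + u₂ ≠ 0 →
      c (u₁ + u₂) = c u₁ + c u₂ := by
    intro u₁ u₂ hsp h1 h2 h12
    obtain ⟨f, hfa, hfk⟩ := dual_sep hsp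
    have hf1 : f u₁ = 0 := hfk _ (Submodule.subset_span (by simp))
    have hf2 : f u₂ = 0 := hfk _ (Submodule.subset_span (by simp))
    have hfne : f ≠ 0 := by rintro rfl; exact hfa rfl
    obtain ⟨g, d, hd, hgd⟩ := hD1 f hfne
    have hdne : d ≠ 0 := fun h => hfa (hd.mp h)
    have hval : ∀ x : U, f x = 0 → x ≠ 0 → d * c x = f a₀ * g x := by
      intro x hfx hx0
      have hxL : x ∉ L := by
        intro hxL
        obtain ⟨k, hk⟩ := Submodule.mem_span_singleton.mp hxL
        have hk0 : k ≠ 0 := by rintro rfl; simp at hk; exact hx0 hk.symm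
        apply hfa
        have : f x = k * f a₀ := by rw [← hk, map_smul, smul_eq_mul]
        rw [hfx] at this
        rcases mul_eq_zero.mp this.symm with h | h
        · exact absurd h hk0
        · exact h
      set s : F := -(g x) / d with hsdef
      have hGx : G (x, s • f) := by
        refine (hgd x hfx s (Or.inl hx0)).mpr ?_
        rw [hsdef]; field_simp; ring
      have hcx := (hc x hxL 1 (s • f) (by simp [hfx]) (Or.inl one_ne_zero)).mp (by rwa [one_smul])
      rw [one_mul, LinearMap.smul_apply, smul_eq_mul, hsdef] at hcx
      field_simp at hcx
      linear_combination hcx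
    have e1 := hval u₁ hf1 h1
    have e2 := hval u₂ hf2 h2
    have e12 := hval (u₁ + u₂) (by rw [map_add, hf1, hf2, add_zero]) h12
    rw [map_add] at e12
    have : d * c (u₁ + u₂) = d * (c u₁ + c u₂) := by linear_combination e12 - e1 - e2
    exact mul_left_cancel₀ hdne this
  -- full additivity
  have hADD2 : ∀ u₁ u₂ : U, u₁ ∉ L → u₂ ∉ L → u₁ + u₂ ∉ L → c (u₁ + u₂) = c u₁ + c u₂ := by
    intro u₁ u₂ h1L h2L h12L
    have h1 := hneL _ h1L
    have h2 := hneL _ h2L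
    have h12 := hneL _ h12L
    by_cases hsp : a₀ ∈ Submodule.span F {u₁, u₂}
    · -- detour through w outside the plane
      have hu₁a : a₀ ∉ Submodule.span F {u₁} := nmem_span_singleton_symm ha₀ h1L
      have hu₂a : a₀ ∉ Submodule.span F {u₂} := nmem_span_singleton_symm ha₀ h2L
      obtain ⟨w, hw⟩ : ∃ w : U, w ∉ Submodule.span F {u₁, u₂} := by
        by_contra hwall
        push_neg at hwall
        have htop : Submodule.span F {u₁, u₂} = ⊤ := Submodule.eq_top_iff'.mpr hwall
        have hle : Submodule.span F ({u₁, u₂} : Set U) ≤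
            Submodule.span F {u₁} ⊔ Submodule.span F {u₂} := by
          rw [Submodule.span_le]
          rintro z (rfl | rfl)
          · exact Submodule.mem_sup_left (Submodule.mem_span_singleton_self _)
          · exact Submodule.mem_sup_right (Submodule.mem_span_singleton_self _)
        have hfr : finrank F (Submodule.span F ({u₁, u₂} : Set U)) ≤ 2 := by
          have := Submodule.finrank_sup_add_finrank_inf_eq (Submodule.span F {u₁}) (Submodule.span F {u₂})
          have hf1 : finrank F (Submodule.span F {u₁}) = 1 := finrank_span_singleton h1
          have hf2 : finrank F (Submodule.span F {u₂}) = 1 := finrank_span_singleton h2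
          have := Submodule.finrank_mono hle
          omega
        rw [htop, finrank_top] at hfr
        rw [hU] at hfr
        omega
      have hwsm : ∀ (k : F) (z : U), z ∈ Submodule.span F {u₁, u₂} → k • z ∈ Submodule.span F {u₁, u₂} :=
        fun k z hz => Submodule.smul_mem _ k hz
      have hwne : w ≠ 0 := fun h => hw (h ▸ Submodule.zero_mem _)
      have hwL : w ∉ L := by
        intro hwL
        obtain ⟨k, hk⟩ := Submodule.mem_span_singleton.mp hwL
        exact hw (hk ▸ hwsm k a₀ hsp)
      have h1w : u₁ + w ≠ 0 := by
        intro h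
        apply hw
        have : w = -u₁ := (neg_eq_of_add_eq_zero_right h).symm
        rw [this]
        exact Submodule.neg_mem _ (Submodule.subset_span (by simp))
      have h2w : u₂ - w ≠ 0 := by
        intro h
        apply hw
        have : w = u₂ := (sub_eq_zero.mp h).symm
        rw [this]
        exact Submodule.subset_span (by simp)
      have hmemu₁ : u₁ ∈ Submodule.span F ({u₁, u₂} : Set U) := Submodule.subset_span (by simp)
      have hmemu₂ : u₂ ∈ Submodule.span F ({u₁, u₂} : Set U) := Submodule.subset_span (by simp)
      -- F1
      have F1 : a₀ ∉ Submodule.span F {u₁ + w, u₂ - w} := by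
        intro hmem
        obtain ⟨p, q, hpq⟩ := Submodule.mem_span_pair.mp hmem
        by_cases hpq' : p = q
        · subst hpq'
          have ha₀eq : a₀ = p • (u₁ + u₂) := by
            rw [← hpq]; module
          by_cases hp : p = 0
          · rw [hp, zero_smul] at ha₀eq; exact ha₀ ha₀eq
          · apply h12L
            rw [hLdef, Submodule.mem_span_singleton]
            exact ⟨p⁻¹, by rw [ha₀eq, smul_smul, inv_mul_cancel₀ hp, one_smul]⟩
        · apply hw
          have hpqne : p - q ≠ 0 := sub_ne_zero.mpr hpq'
          have h' : (p - q) • w = a₀ - p • u₁ - q • u₂ := by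
            rw [← hpq]; module
          have hwe : w = (p - q)⁻¹ • (a₀ - p • u₁ - q • u₂) := by
            rw [← h', smul_smul, inv_mul_cancel₀ hpqne, one_smul]
          rw [hwe]
          exact Submodule.smul_mem _ _ (Submodule.sub_mem _
            (Submodule.sub_mem _ hsp (Submodule.smul_mem _ _ hmemu₁))
            (Submodule.smul_mem _ _ hmemu₂))
      -- F2
      have F2 : a₀ ∉ Submodule.span F {u₁, w} := by
        intro hmem
        obtain ⟨p, q, hpq⟩ := Submodule.mem_span_pair.mp hmem
        by_cases hq : q = 0
        · apply hu₁a
          rw [Submodule.mem_span_singleton]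
          exact ⟨p, by rw [← hpq, hq, zero_smul, add_zero]⟩
        · apply hw
          have h' : q • w = a₀ - p • u₁ := by
            rw [← hpq]; module
          have hwe : w = q⁻¹ • (a₀ - p • u₁) := by
            rw [← h', smul_smul, inv_mul_cancel₀ hq, one_smul]
          rw [hwe]
          exact Submodule.smul_mem _ _ (Submodule.sub_mem _ hsp (Submodule.smul_mem _ _ hmemu₁))
      -- F3
      have F3 : a₀ ∉ Submodule.span F {u₂, -w} := by
        intro hmem
        obtain ⟨p, q, hpq⟩ := Submodule.mem_span_pair.mp hmem
        by_cases hq : q = 0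
        · apply hu₂a
          rw [Submodule.mem_span_singleton]
          exact ⟨p, by rw [← hpq, hq, zero_smul, add_zero]⟩
        · apply hw
          have hqne : -q ≠ 0 := neg_ne_zero.mpr hq
          have h' : (-q) • w = a₀ - p • u₂ := by
            rw [← hpq]; module
          have hwe : w = (-q)⁻¹ • (a₀ - p • u₂) := by
            rw [← h', smul_smul, inv_mul_cancel₀ hqne, one_smul]
          rw [hwe]
          exact Submodule.smul_mem _ _ (Submodule.sub_mem _ hsp (Submodule.smul_mem _ _ hmemu₂))
      have hsum : (u₁ + w) + (u₂ - w) = u₁ + u₂ := by abel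
      have hs1 : c ((u₁ + w) + (u₂ - w)) = c (u₁ + w) + c (u₂ - w) :=
        hADD1 _ _ F1 h1w h2w (by rw [hsum]; exact h12)
      rw [hsum] at hs1
      have hs2 : c (u₁ + w) = c u₁ + c w :=
        hADD1 u₁ w F2 h1 hwne h1w
      have hsub : u₂ + (-w) = u₂ - w := by abel
      have hs3 : c (u₂ - w) = c u₂ + c (-w) := by
        rw [← hsub]
        exact hADD1 u₂ (-w) F3 h2 (neg_ne_zero.mpr hwne) (by rw [hsub]; exact h2w)
      have hs4 : c (-w) = - c w := by
        have := hHOM w hwL (-1) (by norm_num)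
        rw [neg_one_smul] at this
        rw [this]; ring
      rw [hs1, hs2, hs3, hs4]; ring
    · exact hADD1 u₁ u₂ hsp h1 h2 h12

  have hr' : 3 ≤ finrank F U := by rw [hU]; exact hr
  -- AUX : reflection sums
  have hAUX : ∀ z ∈ L, ∀ w w' : U, w ∉ L → w' ∉ L →
      c (z - w) + c w = c (z - w') + c w' := by
    intro z hz w w' hwL hw'L
    have hLsub : ∀ x : U, z - x ∈ L ↔ x ∈ L := by
      intro x
      constructor
      · intro h
        have hx : x = z - (z - x) := by abel
        rw [hx]
        exact Submodule.sub_mem _ hz h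
      · intro h
        exact Submodule.sub_mem _ hz h
    obtain ⟨w'', hA, hB, hC⟩ := avoid3 hr' ha₀ 0 w w'
    rw [add_zero] at hA
    have hw''L : w'' ∉ L := hA
    have hww'' : w + w'' ∉ L := by rw [add_comm]; exact hB
    have hw'w'' : w' + w'' ∉ L := by rw [add_comm]; exact hC
    have key : ∀ v : U, v ∉ L → v + w'' ∉ L → c (z - v) + c v = c (z - w'') + c w'' := by
      intro v hvL hvw
      have hzv : z - v ∉ L := fun h => hvL ((hLsub v).mp h)
      have hzw'' : z - w'' ∉ L := fun h => hw''L ((hLsub w'').mp h)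
      have hzvw : z - v - w'' ∉ L := by
        intro h
        apply hvw
        have he : z - v - w'' = z - (v + w'') := by abel
        rw [he] at h
        exact (hLsub (v + w'')).mp h
      have A1 : c ((z - v - w'') + w'') = c (z - v - w'') + c w'' := by
        refine hADD2 _ _ hzvw hw''L ?_
        have he : (z - v - w'') + w'' = z - v := by abel
        rw [he]; exact hzv
      have A2 : c ((z - v - w'') + v) = c (z - v - w'') + c v := by
        refine hADD2 _ _ hzvw hvL ?_
        have he : (z - v - w'') + v = z - w'' := by abel
        rw [he]; exact hzw''
      have he1 : (z - v - w'') + w'' = z - v := by abel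
      have he2 : (z - v - w'') + v = z - w'' := by abel
      rw [he1] at A1
      rw [he2] at A2
      linear_combination A1 - A2
    rw [key w hwL hww'', key w' hw'L hw'w'']
  -- good companions
  have hGoodEx : ∀ u : U, ∃ w : U, w ∉ L ∧ u + w ∉ L := by
    intro u
    obtain ⟨y, hA, hB, -⟩ := avoid3 hr' ha₀ 0 u u
    rw [add_zero] at hA
    exact ⟨y, hA, by rw [add_comm]; exact hB⟩
  choose wg hwg1 hwg2 using hGoodEx
  -- well-definedness
  have hWD : ∀ u w w' : U, w ∉ L → u + w ∉ L → w' ∉ L → u + w' ∉ L →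
      c (u + w) - c w = c (u + w') - c w' := by
    intro u w w' hw1 hw2 hw1' hw2'
    by_cases hz : u + w + w' ∈ L
    · have e1 : (u + w + w') - w' = u + w := by abel
      have e2 : (u + w + w') - w = u + w' := by abel
      have hthis := hAUX (u + w + w') hz w w' hw1 hw1'
      rw [e1, e2] at hthis
      linear_combination -hthis
    · have A : c ((u + w) + w') = c (u + w) + c w' := by
        refine hADD2 _ _ hw2 hw1' ?_
        have he : (u + w) + w' = u + w + w' := by abel
        rw [he]; exact hz
      have B : c ((u + w') + w) = c (u + w') + c w := by
        refine hADD2 _ _ hw2' hw1 ?_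
        have he : (u + w') + w = u + w + w' := by abel
        rw [he]; exact hz
      have he : (u + w') + w = (u + w) + w' := by abel
      rw [he] at B
      linear_combination B - A
  set ψf : U → F := fun u => c (u + wg u) - c (wg u) with hψfdef
  have hψfeq : ∀ u w, w ∉ L → u + w ∉ L → ψf u = c (u + w) - c w := by
    intro u w h1 h2
    exact hWD u (wg u) w (hwg1 u) (hwg2 u) h1 h2
  have hψfadd : ∀ u₁ u₂, ψf (u₁ + u₂) = ψf u₁ + ψf u₂ := by
    intro u₁ u₂
    obtain ⟨y, hA, hB, hC⟩ := avoid3 hr' ha₀ 0 u₂ (u₁ + u₂)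
    rw [add_zero] at hA
    have hB' : u₂ + y ∉ L := by rw [add_comm]; exact hB
    have hC' : (u₁ + u₂) + y ∉ L := by rw [add_comm]; exact hC
    have h2 : ψf u₂ = c (u₂ + y) - c y := hψfeq u₂ y hA hB'
    have h1 : ψf u₁ = c (u₁ + (u₂ + y)) - c (u₂ + y) := by
      refine hψfeq u₁ (u₂ + y) hB' ?_
      have he : u₁ + (u₂ + y) = (u₁ + u₂) + y := by abel
      rw [he]; exact hC'
    have h12 : ψf (u₁ + u₂) = c ((u₁ + u₂) + y) - c y := hψfeq (u₁ + u₂) y hA hC'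
    have he : u₁ + (u₂ + y) = (u₁ + u₂) + y := by abel
    rw [he] at h1
    rw [h12, h1, h2]; ring
  have hψfsmul : ∀ (k : F) (u : U), ψf (k • u) = k * ψf u := by
    intro k u
    by_cases hk : k = 0
    · subst hk
      rw [zero_smul, zero_mul]
      show c (0 + wg 0) - c (wg 0) = 0
      rw [zero_add]; ring
    · have hw1 : wg u ∉ L := hwg1 u
      have hw2 : u + wg u ∉ L := hwg2 u
      have hkw1 : k • wg u ∉ L := fun h => hw1 ((Submodule.smul_mem_iff L hk).mp h)
      have hkw2 : k • u + k • wg u ∉ L := by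
        rw [← smul_add]
        exact fun h => hw2 ((Submodule.smul_mem_iff L hk).mp h)
      have h1 : ψf (k • u) = c (k • u + k • wg u) - c (k • wg u) := hψfeq _ _ hkw1 hkw2
      have h2 : c (k • u + k • wg u) = k * c (u + wg u) := by
        rw [← smul_add]
        exact hHOM _ hw2 k hk
      have h3 : c (k • wg u) = k * c (wg u) := hHOM _ hw1 k hk
      rw [h1, h2, h3]
      show k * c (u + wg u) - k * c (wg u) = k * (c (u + wg u) - c (wg u))
      ring
  set ψ : Dual F U := LinearMap.mk (AddHom.mk ψf hψfadd)
    (by intro k u; simpa using hψfsmul k u) with hψdef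
  have hψapp : ∀ u, ψ u = ψf u := fun u => rfl
  have hψc : ∀ u, u ∉ L → ψ u = c u := by
    intro u huL
    rw [hψapp]
    have h1 : ψf u = c (u + wg u) - c (wg u) := rfl
    have h2 : c (u + wg u) = c u + c (wg u) := hADD2 u (wg u) huL (hwg1 u) (hwg2 u)
    rw [h1, h2]; ring
  -- the special chart at a₀
  have hSP : ∀ (t : F) (φ : Dual F U), φ a₀ = 0 → t ≠ 0 → ¬ G (t • a₀, φ) := by
    have hev : ∃ f : Dual F U, f a₀ ≠ 0 := by
      obtain ⟨f, hf, -⟩ := dual_sep (p := (⊥ : Submodule F U)) (by simpa using ha₀)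
      exact ⟨f, hf⟩
    have hevne : (Module.Dual.eval F U) a₀ ≠ 0 := by
      intro h
      obtain ⟨f, hf⟩ := hev
      exact hf (by
        have := congrArg (fun g => g f) h
        simpa using this)
    obtain ⟨ℓ, ⟨mne, hmnemem, hmnene⟩, hiff⟩ := hchart
      ((Submodule.span F {a₀}).prod (LinearMap.ker ((Module.Dual.eval F U) a₀)))
      (by rintro ⟨x, φ⟩ hm
          rw [Submodule.mem_prod] at hm
          obtain ⟨t, ht⟩ := Submodule.mem_span_singleton.mp hm.1
          have hφa : φ a₀ = 0 := by
            have h2 := hm.2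
            rwa [LinearMap.mem_ker, Module.Dual.eval_apply] at h2
          show φ x = 0
          have hx : x = t • a₀ := ht.symm
          rw [hx, map_smul, smul_eq_mul, hφa, mul_zero])
      (by rw [finrank_submodule_prod, finrank_span_singleton ha₀, finrank_ker_eq hevne, hdual]
          omega)
    set c' : F := ℓ (a₀, 0) with hc'def
    set α : U := (evalEquiv F U).symm (ℓ.comp (LinearMap.inr F U (Dual F U))) with hαdef
    have hαapp : ∀ φ : Dual F U, φ α = ℓ (0, φ) := by
      intro φ
      rw [hαdef, Module.apply_evalEquiv_symm_apply]
      rfl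
    have hℓeval : ∀ (t : F) (φ : Dual F U), ℓ (t • a₀, φ) = t * c' + φ α := by
      intro t φ
      rw [hdec, hαapp]
      congr 1
      have h1 : ((t • a₀ : U), (0 : Dual F U)) = t • ((a₀, 0) : U × Dual F U) := by
        simp [Prod.smul_mk]
      rw [h1, map_smul, smul_eq_mul]
    have hα0 : ∀ φ : Dual F U, φ a₀ = 0 → φ α = 0 := by
      intro φ hφa
      by_cases hφ : φ = 0
      · rw [hφ]; rfl
      · have h1 : G (0, φ) ↔ φ α = 0 := by
          rw [hαapp]
          refine hiff (0, φ) ?_ (by simp [Prod.mk_eq_zero, hφ])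
          rw [Submodule.mem_prod]
          refine ⟨Submodule.zero_mem _, ?_⟩
          simp only [LinearMap.mem_ker, Module.Dual.eval_apply]
          exact hφa
        exact h1.mp ((specW φ hφ).mpr hφa)
    have hαmem : α ∈ Submodule.span F {a₀} := mem_span_of_dual (fun f hf => hα0 f hf)
    obtain ⟨sα, hsα⟩ := Submodule.mem_span_singleton.mp hαmem
    have hc'ne : c' ≠ 0 := by
      intro hc'0
      apply hmnene
      obtain ⟨t₀, ht₀⟩ := Submodule.mem_span_singleton.mp ((Submodule.mem_prod.mp hmnemem).1)
      have hφm : mne.2 a₀ = 0 := by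
        have h2 := (Submodule.mem_prod.mp hmnemem).2
        rwa [LinearMap.mem_ker, Module.Dual.eval_apply] at h2
      have hmne : mne = ((t₀ • a₀ : U), mne.2) := by
        rw [ht₀]
      rw [hmne, hℓeval, hc'0, mul_zero, zero_add]
      rw [← hsα, map_smul, smul_eq_mul, hφm, mul_zero]
    intro t φ hφa ht hG
    have hmem : ((t • a₀ : U), φ) ∈ (Submodule.span F {a₀}).prod (LinearMap.ker ((Module.Dual.eval F U) a₀)) := by
      rw [Submodule.mem_prod]
      refine ⟨Submodule.smul_mem _ _ (Submodule.mem_span_singleton_self a₀), ?_⟩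
      simp only [LinearMap.mem_ker, Module.Dual.eval_apply]
      exact hφa
    have hne' : ((t • a₀ : U), φ) ≠ 0 := by
      rw [ne_eq, Prod.mk_eq_zero, not_and_or]
      exact Or.inl (smul_ne_zero ht ha₀)
    have := (hiff _ hmem hne').mp hG
    rw [hℓeval, hα0 φ hφa, add_zero] at this
    rcases mul_eq_zero.mp this with h | h
    · exact ht h
    · exact hc'ne h
  -- ψ does not vanish at a₀
  have hψa₀ : ψ a₀ ≠ 0 := by
    intro h0
    have hex : ∃ u₁, u₁ ∉ L ∧ ψ₀ u₁ ≠ 0 := by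
      by_contra hno
      push_neg at hno
      obtain ⟨x, hx⟩ := hψ₀ne
      apply hx
      by_cases hxL : x ∈ L
      · have hw1 := hwg1 x
        have hw2 := hwg2 x
        set w := wg x
        have h1 : ψ₀ (x + w) = 0 := hno _ hw2
        have h2 : ψ₀ w = 0 := hno _ hw1
        have h3 := map_add ψ₀ x w
        rw [h1, h2] at h3
        linear_combination -h3
      · exact hno _ hxL
    obtain ⟨u₁, hu₁L, hu₁ψ⟩ := hex
    have hcu₁ : c u₁ ≠ 0 := by
      intro hc0
      have hG : G (u₁, 0) := by
        have h := hc u₁ hu₁L 1 0 (by simp) (Or.inl one_ne_zero)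
        rw [one_smul, one_mul] at h
        apply h.mpr
        rw [hc0]
        simp
      exact hu₁ψ ((specU u₁ (hneL _ hu₁L)).mp hG)
    have hψne : ψ ≠ 0 := by
      intro h
      apply hcu₁
      have := hψc u₁ hu₁L
      rw [h] at this
      simpa using this.symm
    obtain ⟨g, d, hd, hgd⟩ := hD1 ψ hψne
    have hdz : d = 0 := hd.mpr h0
    have hg0 : ∀ x : U, ψ x = 0 → x ∉ L → g x = 0 := by
      intro x hψx hxL
      have hGx : G (x, 0) := by
        have h := hc x hxL 1 0 (by simp) (Or.inl one_ne_zero)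
        rw [one_smul, one_mul] at h
        apply h.mpr
        rw [← hψc x hxL, hψx]
        simp
      have h := (hgd x hψx 0 (Or.inl (hneL _ hxL))).mp (by rw [zero_smul]; exact hGx)
      rw [zero_mul, add_zero] at h
      exact h
    have hkerL : ¬ (LinearMap.ker ψ ≤ L) := by
      intro hle
      have h1 : finrank F (LinearMap.ker ψ) ≤ finrank F L := Submodule.finrank_mono hle
      rw [finrank_ker_eq hψne, hU] at h1
      have h2 : finrank F L = 1 := finrank_span_singleton ha₀
      rw [h2] at h1
      omega
    obtain ⟨w, hwker, hwL⟩ := SetLike.not_le_iff_exists.mp hkerL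
    have hwψ : ψ w = 0 := hwker
    have haw : a₀ + w ∉ L := by
      intro h
      apply hwL
      have hmem : a₀ ∈ L := Submodule.mem_span_singleton_self a₀
      have h2 := Submodule.sub_mem L h hmem
      rwa [add_sub_cancel_left] at h2
    have hgw : g w = 0 := hg0 w hwψ hwL
    have hgaw : g (a₀ + w) = 0 := by
      refine hg0 _ ?_ haw
      rw [map_add, h0, hwψ, add_zero]
    have hga : g a₀ = 0 := by
      have h3 := map_add g a₀ w
      rw [hgaw, hgw, add_zero] at h3
      exact h3.symm
    have hGaψ : G (a₀, (1:F) • ψ) := by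
      refine (hgd a₀ h0 1 (Or.inl ha₀)).mpr ?_
      rw [hga, hdz]; ring
    rw [one_smul] at hGaψ
    have hsp1 := hSP 1 ψ h0 one_ne_zero
    rw [one_smul] at hsp1
    exact hsp1 hGaψ
  -- conclusion
  refine ⟨a₀, ψ, hψa₀, ?_⟩
  intro u φ hφu hne0
  by_cases huL : u ∈ L
  · by_cases hu0 : u = 0
    · subst hu0
      have hφ : φ ≠ 0 := by
        intro h
        apply hne0
        rw [h]
        rfl
      rw [specW φ hφ, map_zero, zero_add]
    · obtain ⟨k, hk⟩ := Submodule.mem_span_singleton.mp huL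
      have hk0 : k ≠ 0 := by
        rintro rfl
        rw [zero_smul] at hk
        exact hu0 hk.symm
      have hφa : φ a₀ = 0 := by
        have h1 : φ u = k * φ a₀ := by rw [← hk, map_smul, smul_eq_mul]
        rw [hφu] at h1
        rcases mul_eq_zero.mp h1.symm with h | h
        · exact absurd h hk0
        · exact h
      have hnG : ¬ G (u, φ) := by
        have := hSP k φ hφa hk0
        rwa [hk] at this
      have hrhs : ψ u + φ a₀ ≠ 0 := by
        rw [hφa, add_zero, ← hk, map_smul, smul_eq_mul]
        exact mul_ne_zero hk0 hψa₀
      exact iff_of_false hnG hrhs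
  · have h := hc u huL 1 φ hφu (Or.inl one_ne_zero)
    rw [one_smul, one_mul] at h
    rw [h, hψc u huL]

end Part2

set_option maxHeartbeats 2000000 in
/-- Theorem 10.3: let `Ω` be the set of singular points of a nondegenerate
quadric of type `O⁺(2r,q)`, `r ≥ 3`, and let `Φ ⊆ Ω` be such that for every maximal
totally singular subspace `U` (of dimension `r`) the intersection `Φ ∩ U` is the point set
of an `(r−1)`-dimensional subspace of `U`.  Then `Φ = Ω ∩ v^⊥` for some nonsingular
vector `v`. -/
theorem hyperplane_section_characterization
    (F : Type*) [Field F] [Fintype F]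
    (V : Type*) [AddCommGroup V] [Module F V] [FiniteDimensional F V]
    (Q : QuadraticForm F V) (r : ℕ) (hr : 3 ≤ r)
    (hdim : finrank F V = 2 * r)
    (hnd : (QuadraticMap.polarBilin Q).Nondegenerate)
    -- Witt index `r` (plus type)
    (hwitt_le : ∀ U : Submodule F V, (∀ v ∈ U, Q v = 0) → finrank F U ≤ r)
    (hwitt_ex : ∃ U : Submodule F V, (∀ v ∈ U, Q v = 0) ∧ finrank F U = r)
    (Φ : Set (Submodule F V))
    (hΦΩ : ∀ x ∈ Φ, finrank F x = 1 ∧ ∀ v ∈ x, Q v = 0)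
    -- `Φ ∩ U` is an `(r−1)`-subspace for every maximal totally singular `U`
    (hsec : ∀ U : Submodule F V, (∀ v ∈ U, Q v = 0) → finrank F U = r →
        ∃ U' : Submodule F V, U' ≤ U ∧ finrank F U' = r - 1 ∧
          ∀ x : Submodule F V, finrank F x = 1 → x ≤ U → (x ∈ Φ ↔ x ≤ U')) :
    ∃ v : V, Q v ≠ 0 ∧
      ∀ x : Submodule F V, finrank F x = 1 → (∀ w ∈ x, Q w = 0) →
        (x ∈ Φ ↔ x ≤ LinearMap.BilinForm.orthogonal (QuadraticMap.polarBilin Q) (Submodule.span F {v})) := by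
  classical
  set B := QuadraticMap.polarBilin Q with hBdef
  have hpolar : ∀ x y : V, B x y = Q (x + y) - Q x - Q y := by
    intro x y
    rw [hBdef, QuadraticMap.polarBilin_apply_apply]
    rfl
  have hBsymm : ∀ x y : V, B x y = B y x := by
    intro x y; rw [hpolar, hpolar, add_comm]; ring
  obtain ⟨U₀, hU₀ts, hU₀rk⟩ := hwitt_ex
  have hUpolar0 : ∀ S : Submodule F V, (∀ z ∈ S, Q z = 0) → ∀ x ∈ S, ∀ y ∈ S, B x y = 0 := by
    intro S hS x hx y hy
    rw [hpolar, hS _ (S.add_mem hx hy), hS _ hx, hS _ hy]; ring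
  obtain ⟨C, hC⟩ := Submodule.exists_isCompl U₀
  have hCrk : finrank F C = r := by
    have h := Submodule.finrank_add_eq_of_isCompl hC
    rw [hU₀rk, hdim] at h; omega
  set P : ↥U₀ →ₗ[F] Dual F ↥C := (B.comp U₀.subtype).compl₂ C.subtype with hPdef
  have hPapp : ∀ (u : ↥U₀) (cc : ↥C), P u cc = B (u : V) (cc : V) := fun _ _ => rfl
  have hPinj : Function.Injective P := by
    rw [← LinearMap.ker_eq_bot, Submodule.eq_bot_iff]
    intro u hu
    rw [LinearMap.mem_ker] at hu
    have hu0 : ∀ cc : ↥C, B (u : V) (cc : V) = 0 := by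
      intro cc
      rw [← hPapp, hu]
      rfl
    have hBu : ∀ v : V, B (u : V) v = 0 := by
      intro v
      have hv : v ∈ U₀ ⊔ C := by rw [hC.sup_eq_top]; trivial
      obtain ⟨y, hy, z, hz, rfl⟩ := Submodule.mem_sup.mp hv
      have h1 : B (u : V) y = 0 := hUpolar0 U₀ hU₀ts _ u.2 _ hy
      have h2 : B (u : V) z = 0 := hu0 ⟨z, hz⟩
      rw [map_add, h1, h2, add_zero]
    exact Subtype.ext (hnd.1 _ hBu)
  have hDualC : finrank F (Dual F ↥C) = r := by rw [Subspace.dual_finrank_eq, hCrk]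
  set Piso := LinearMap.linearEquivOfInjective P hPinj (by rw [hU₀rk, hDualC]) with hPisodef
  have hPisoapp : ∀ u, Piso u = P u := fun u => rfl
  set QC := Q.comp C.subtype with hQCdef
  set bC := Module.finBasis F ↥C with hbCdef
  set β := QC.toBilin bC with hβdef
  have hβQ : ∀ cc : ↥C, β cc cc = Q (cc : V) := by
    intro cc
    have h1 : β.toQuadraticMap cc = QC cc := by
      rw [hβdef, QuadraticMap.toQuadraticMap_toBilin]
    rw [LinearMap.BilinMap.toQuadraticMap_apply] at h1
    rw [h1, hQCdef]
    rfl
  set θ : ↥C →ₗ[F] ↥U₀ := Piso.symm.toLinearMap.comp β.flip with hθdef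
  have hθspec : ∀ cc cc' : ↥C, B ((θ cc : ↥U₀) : V) (cc' : V) = β cc' cc := by
    intro cc cc'
    have h1 : P (θ cc) = β.flip cc := by
      rw [hθdef]
      show Piso (Piso.symm (β.flip cc)) = β.flip cc
      exact Piso.apply_symm_apply _
    have h2 := congrArg (fun f => f cc') h1
    simpa [hPapp] using h2
  set j : ↥C →ₗ[F] V := C.subtype - U₀.subtype.comp θ with hjdef
  have hjapp : ∀ cc : ↥C, j cc = (cc : V) - ((θ cc : ↥U₀) : V) := fun cc => rfl
  set W₀ := LinearMap.range j with hW₀def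
  have hW₀ts : ∀ w ∈ W₀, Q w = 0 := by
    rintro w ⟨cc, rfl⟩
    rw [hjapp]
    have hQθ : Q ((θ cc : ↥U₀) : V) = 0 := hU₀ts _ (θ cc).2
    have h2 : B (cc : V) ((θ cc : ↥U₀) : V) = Q (cc : V) := by
      rw [hBsymm, hθspec cc cc, hβQ]
    have hexp := hpolar (cc : V) (-((θ cc : ↥U₀) : V))
    rw [QuadraticMap.map_neg] at hexp
    have hBneg : B (cc : V) (-((θ cc : ↥U₀) : V)) = - B (cc : V) ((θ cc : ↥U₀) : V) := by
      rw [map_neg]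
    rw [hBneg] at hexp
    have hsub : (cc : V) + (-((θ cc : ↥U₀) : V)) = (cc : V) - ((θ cc : ↥U₀) : V) := by abel
    rw [hsub] at hexp
    rw [hQθ] at hexp
    linear_combination -hexp - h2
  have hjinj : Function.Injective j := by
    rw [← LinearMap.ker_eq_bot, Submodule.eq_bot_iff]
    intro cc hcc
    rw [LinearMap.mem_ker, hjapp] at hcc
    have hceq : (cc : V) = ((θ cc : ↥U₀) : V) := sub_eq_zero.mp hcc
    have hmem : (cc : V) ∈ U₀ ⊓ C := ⟨hceq ▸ (θ cc).2, cc.2⟩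
    rw [hC.inf_eq_bot] at hmem
    exact Subtype.ext (by simpa using hmem)
  have hW₀rk : finrank F W₀ = r := by
    have h1 := LinearMap.finrank_range_add_finrank_ker j
    rw [LinearMap.ker_eq_bot.mpr hjinj, finrank_bot, hCrk, add_zero] at h1
    exact h1
  have hdisj : U₀ ⊓ W₀ = ⊥ := by
    rw [Submodule.eq_bot_iff]
    rintro x ⟨hxU, cc, rfl⟩
    have h1 : (cc : V) ∈ U₀ := by
      have he : (cc : V) = j cc + ((θ cc : ↥U₀) : V) := by rw [hjapp]; abel
      rw [he]
      exact U₀.add_mem hxU (θ cc).2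
    have h2 : (cc : V) ∈ U₀ ⊓ C := ⟨h1, cc.2⟩
    rw [hC.inf_eq_bot] at h2
    have h3 : cc = 0 := Subtype.ext (by simpa using h2)
    rw [h3, map_zero]
  have hsup : U₀ ⊔ W₀ = ⊤ := by
    rw [Submodule.eq_top_iff']
    intro v
    have hv : v ∈ U₀ ⊔ C := by rw [hC.sup_eq_top]; trivial
    obtain ⟨y, hy, z, hz, rfl⟩ := Submodule.mem_sup.mp hv
    have he : y + z = (y + ((θ ⟨z, hz⟩ : ↥U₀) : V)) + j ⟨z, hz⟩ := by
      rw [hjapp]; abel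
    rw [he]
    exact Submodule.add_mem_sup (U₀.add_mem hy (θ _).2) ⟨_, rfl⟩
  have hcompl : IsCompl U₀ W₀ := ⟨disjoint_iff.mpr hdisj, codisjoint_iff.mpr hsup⟩
  set Pw : ↥W₀ →ₗ[F] Dual F ↥U₀ := (B.comp W₀.subtype).compl₂ U₀.subtype with hPwdef
  have hPwapp : ∀ (w : ↥W₀) (u : ↥U₀), Pw w u = B (w : V) (u : V) := fun _ _ => rfl
  have hPwinj : Function.Injective Pw := by
    rw [← LinearMap.ker_eq_bot, Submodule.eq_bot_iff]
    intro w hw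
    rw [LinearMap.mem_ker] at hw
    have hw0 : ∀ u : ↥U₀, B (w : V) (u : V) = 0 := by
      intro u
      rw [← hPwapp, hw]
      rfl
    have hBw : ∀ v : V, B (w : V) v = 0 := by
      intro v
      have hv : v ∈ U₀ ⊔ W₀ := by rw [hsup]; trivial
      obtain ⟨y, hy, z, hz, rfl⟩ := Submodule.mem_sup.mp hv
      have h1 : B (w : V) y = 0 := hw0 ⟨y, hy⟩
      have h2 : B (w : V) z = 0 := hUpolar0 W₀ hW₀ts _ w.2 _ hz
      rw [map_add, h1, h2, add_zero]
    exact Subtype.ext (hnd.1 _ hBw)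
  have hDualU : finrank F (Dual F ↥U₀) = r := by rw [Subspace.dual_finrank_eq, hU₀rk]
  set ω := LinearMap.linearEquivOfInjective Pw hPwinj (by rw [hW₀rk, hDualU]) with hωdef
  have hωapp : ∀ w, ω w = Pw w := fun w => rfl
  set E : (↥U₀ × Dual F ↥U₀) ≃ₗ[F] V :=
    (LinearEquiv.prodCongr (LinearEquiv.refl F ↥U₀) ω.symm).trans
      (Submodule.prodEquivOfIsCompl U₀ W₀ hcompl) with hEdef
  have hEapp : ∀ (u : ↥U₀) (φ : Dual F ↥U₀),
      E (u, φ) = (u : V) + ((ω.symm φ : ↥W₀) : V) := fun u φ => rfl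
  have hQE : ∀ p : ↥U₀ × Dual F ↥U₀, Q (E p) = p.2 p.1 := by
    rintro ⟨u, φ⟩
    rw [hEapp]
    have hQw : Q ((ω.symm φ : ↥W₀) : V) = 0 := hW₀ts _ (ω.symm φ).2
    have hQu : Q (u : V) = 0 := hU₀ts _ u.2
    have hBuw : B (u : V) ((ω.symm φ : ↥W₀) : V) = φ u := by
      rw [hBsymm]
      have h1 : Pw (ω.symm φ) u = φ u := by
        have h2 : ω (ω.symm φ) = φ := ω.apply_symm_apply φ
        calc Pw (ω.symm φ) u = (ω (ω.symm φ)) u := rfl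
          _ = φ u := by rw [h2]
      rw [← hPwapp, h1]
    have hexp := hpolar (u : V) ((ω.symm φ : ↥W₀) : V)
    rw [hQw, hQu, hBuw] at hexp
    show Q ((u : V) + ((ω.symm φ : ↥W₀) : V)) = φ u
    linear_combination -hexp
  have hBE : ∀ p p' : ↥U₀ × Dual F ↥U₀, B (E p) (E p') = p.2 p'.1 + p'.2 p.1 := by
    intro p p'
    have h1 := hpolar (E p) (E p')
    have hadd : E p + E p' = E (p + p') := (map_add E p p').symm
    rw [hadd, hQE, hQE, hQE] at h1
    have hexp : (p + p').2 (p + p').1 = p.2 p.1 + p.2 p'.1 + p'.2 p.1 + p'.2 p'.1 := by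
      show (p.2 + p'.2) (p.1 + p'.1) = _
      rw [LinearMap.add_apply, map_add, map_add]
      ring
    rw [hexp] at h1
    linear_combination h1
  set G : ↥U₀ × Dual F ↥U₀ → Prop := fun p => Submodule.span F {E p} ∈ Φ with hGdef
  have hchart : ∀ M : Submodule F (↥U₀ × Dual F ↥U₀), (∀ m ∈ M, m.2 m.1 = (0:F)) →
      finrank F M = r →
      ∃ ℓ : Dual F (↥U₀ × Dual F ↥U₀), (∃ m ∈ M, ℓ m ≠ 0) ∧
        ∀ m ∈ M, m ≠ 0 → (G m ↔ ℓ m = 0) := by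
    intro M hMts hMrk
    set M' := M.map (E : ↥U₀ × Dual F ↥U₀ →ₗ[F] V) with hM'def
    have hM'ts : ∀ v ∈ M', Q v = 0 := by
      rintro v ⟨m, hm, rfl⟩
      have : Q (E m) = m.2 m.1 := hQE m
      rw [show ((E : ↥U₀ × Dual F ↥U₀ →ₗ[F] V) m) = E m from rfl, this]
      exact hMts m hm
    have hM'rk : finrank F M' = r := by
      rw [hM'def, LinearEquiv.finrank_map_eq]
      exact hMrk
    obtain ⟨U', hU'le, hU'rk, hU'iff⟩ := hsec M' hM'ts hM'rk
    have hex : ∃ v₀ ∈ M', v₀ ∉ U' := by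
      by_contra h
      push_neg at h
      have hle : M' ≤ U' := h
      have h2 := Submodule.finrank_mono hle
      rw [hM'rk, hU'rk] at h2
      omega
    obtain ⟨v₀, hv₀M, hv₀U⟩ := hex
    obtain ⟨ℓ, hℓv₀, hℓU'⟩ := dual_sep hv₀U
    refine ⟨ℓ.comp (E : ↥U₀ × Dual F ↥U₀ →ₗ[F] V), ⟨E.symm v₀, ?_, ?_⟩, ?_⟩
    · obtain ⟨m, hm, hmv⟩ := hv₀M
      have heq : E.symm v₀ = m := by
        rw [← hmv]
        exact E.symm_apply_apply m
      rw [heq]; exact hm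
    · show ℓ (E (E.symm v₀)) ≠ 0
      rw [E.apply_symm_apply]
      exact hℓv₀
    · intro m hmM hm0
      have hEm : E m ∈ M' := ⟨m, hmM, rfl⟩
      have hEm0 : E m ≠ 0 := by
        intro h
        apply hm0
        have := congrArg E.symm h
        rwa [E.symm_apply_apply, map_zero] at this
      have hiffΦ : G m ↔ E m ∈ U' := by
        show Submodule.span F {E m} ∈ Φ ↔ E m ∈ U'
        rw [hU'iff (Submodule.span F {E m}) (finrank_span_singleton hEm0)
          ((Submodule.span_singleton_le_iff_mem _ _).mpr hEm),
          Submodule.span_singleton_le_iff_mem]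
      rw [hiffΦ]
      show E m ∈ U' ↔ ℓ (E m) = 0
      constructor
      · exact fun h => hℓU' _ h
      · intro hl
        by_contra hnot
        have hJle : U' ⊔ Submodule.span F {E m} ≤ M' :=
          sup_le hU'le ((Submodule.span_singleton_le_iff_mem _ _).mpr hEm)
        have hlt : U' < U' ⊔ Submodule.span F {E m} := by
          refine lt_of_le_of_ne le_sup_left ?_
          intro h
          apply hnot
          have : Submodule.span F {E m} ≤ U' := by
            rw [h]; exact le_sup_right
          exact (Submodule.span_singleton_le_iff_mem _ _).mp this
        have h1 := Submodule.finrank_lt_finrank_of_lt hlt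
        have h2 := Submodule.finrank_mono hJle
        rw [hM'rk] at h2
        rw [hU'rk] at h1
        have hJeq : U' ⊔ Submodule.span F {E m} = M' :=
          Submodule.eq_of_le_of_finrank_eq hJle (by omega)
        have hsub : M' ≤ LinearMap.ker ℓ := by
          rw [← hJeq]
          apply sup_le
          · intro z hz
            exact LinearMap.mem_ker.mpr (hℓU' z hz)
          · rw [Submodule.span_singleton_le_iff_mem]
            exact LinearMap.mem_ker.mpr hl
        exact hℓv₀ (LinearMap.mem_ker.mp (hsub hv₀M))
  obtain ⟨a, ψ, hψa, hiffstd⟩ := part2 r hr hU₀rk G hchart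
  refine ⟨E (a, ψ), ?_, ?_⟩
  · rw [hQE (a, ψ)]
    exact hψa
  · intro x hx1 hxts
    have hxne : x ≠ ⊥ := by
      intro h
      rw [h, finrank_bot] at hx1
      omega
    obtain ⟨m, hmx, hm0⟩ := Submodule.exists_mem_ne_zero_of_ne_bot hxne
    have hxspan : Submodule.span F {m} = x :=
      Submodule.eq_of_le_of_finrank_eq ((Submodule.span_singleton_le_iff_mem _ _).mpr hmx)
        (by rw [finrank_span_singleton hm0, hx1])
    set p := E.symm m with hpdef
    have hEp : E p = m := E.apply_symm_apply m
    have hp0 : p ≠ 0 := by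
      intro h
      apply hm0
      rw [← hEp, h, map_zero]
    have hpts : p.2 p.1 = 0 := by
      rw [← hQE p, hEp]
      exact hxts m hmx
    have hGp : G p ↔ x ∈ Φ := by
      show Submodule.span F {E p} ∈ Φ ↔ x ∈ Φ
      rw [hEp, hxspan]
    have hstd' := hiffstd p.1 p.2 hpts (by exact hp0)
    have hstd : G p ↔ ψ p.1 + p.2 a = 0 := hstd'
    have hBvm : B (E (a, ψ)) m = ψ p.1 + p.2 a := by
      rw [← hEp, hBE]
    have hortho : (x ≤ LinearMap.BilinForm.orthogonal B (Submodule.span F {E (a, ψ)})) ↔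
        B (E (a, ψ)) m = 0 := by
      constructor
      · intro h
        have h2 := h hmx
        rw [LinearMap.BilinForm.mem_orthogonal_iff] at h2
        exact h2 _ (Submodule.mem_span_singleton_self _)
      · intro h z hz
        rw [LinearMap.BilinForm.mem_orthogonal_iff]
        intro n hn
        obtain ⟨s, hs⟩ := Submodule.mem_span_singleton.mp hn
        rw [← hxspan] at hz
        obtain ⟨t, ht⟩ := Submodule.mem_span_singleton.mp hz
        show B n z = 0
        rw [← hs, ← ht]
        simp only [map_smul, LinearMap.smul_apply, smul_eq_mul]
        rw [h]
        ring
      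
    rw [← hGp, hstd, hortho, hBvm]
end
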